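/- arXiv:1303.1259 — 7 statements merged into one kernel-verified Lean document; each statement's English description precedes it below -/
import Mathlib

section
/- Let k₁, k₂: ℝ × ℝ → ℝ be smooth functions, 2π-periodic in x, satisfying the system (k₁)_t = k₁'' + 2k₂' and (k₂)_t = (2/3)(k₁k₁' − k₁''') − k₂''. Then the three quantities ∫₀^{2π} k₁ dx, ∫₀^{2π} k₂ dx, and ∫₀^{2π} ρ₃ dx, where ρ₃ = (1/3)(k₁')² + k₂k₁' + k₂² + (1/9)k₁³, are each constant in t. -/
open Real MeasureTheory intervalIntegral Metric

/-- Partial derivative in the first (space) variable. -/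
noncomputable def pdx {E : Type*} [NormedAddCommGroup E] [NormedSpace ℝ E]
    (f : ℝ → ℝ → E) : ℝ → ℝ → E := fun x t => deriv (fun x' => f x' t) x

/-- Partial derivative in the second (time) variable. -/
noncomputable def pdt {E : Type*} [NormedAddCommGroup E] [NormedSpace ℝ E]
    (f : ℝ → ℝ → E) : ℝ → ℝ → E := fun x t => deriv (fun t' => f x t') t

/-- Directional derivative of a function on the plane. -/
noncomputable def DD (w : ℝ × ℝ) (g : ℝ × ℝ → ℝ) : ℝ × ℝ → ℝ := fun p => fderiv ℝ g p w

/-- Uncurrying. -/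
def unc (f : ℝ → ℝ → ℝ) : ℝ × ℝ → ℝ := fun p => f p.1 p.2

lemma hasDerivAt_slice_x (g : ℝ × ℝ → ℝ) {x t : ℝ} (hg : DifferentiableAt ℝ g (x, t)) :
    HasDerivAt (fun x' => g (x', t)) (DD (1,0) g (x,t)) x := by
  have hl : HasDerivAt (fun x' : ℝ => (x', t)) ((1:ℝ),(0:ℝ)) x := by
    simpa using ((hasDerivAt_id x).prodMk (hasDerivAt_const x t))
  exact hg.hasFDerivAt.comp_hasDerivAt x hl

lemma hasDerivAt_slice_t (g : ℝ × ℝ → ℝ) {x t : ℝ} (hg : DifferentiableAt ℝ g (x, t)) :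
    HasDerivAt (fun t' => g (x, t')) (DD (0,1) g (x,t)) t := by
  have hl : HasDerivAt (fun t' : ℝ => (x, t')) ((0:ℝ),(1:ℝ)) t := by
    simpa using ((hasDerivAt_const t x).prodMk (hasDerivAt_id t))
  exact hg.hasFDerivAt.comp_hasDerivAt t hl

lemma DD_contDiff {g : ℝ × ℝ → ℝ} (hg : ContDiff ℝ (⊤ : ℕ∞) g) (w : ℝ × ℝ) :
    ContDiff ℝ (⊤ : ℕ∞) (DD w g) := by
  have h1 : ContDiff ℝ (⊤ : ℕ∞) (fderiv ℝ g) := hg.fderiv_right (by simp)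
  exact (ContinuousLinearMap.apply ℝ ℝ w).contDiff.comp h1

lemma DD_comm {g : ℝ × ℝ → ℝ} (hg : ContDiff ℝ (⊤ : ℕ∞) g) (v w p : ℝ × ℝ) :
    DD w (DD v g) p = DD v (DD w g) p := by
  have hdg : ∀ y, HasFDerivAt g (fderiv ℝ g y) y := fun y =>
    (hg.differentiable (by simp) y).hasFDerivAt
  have h1 : ContDiff ℝ (⊤ : ℕ∞) (fderiv ℝ g) := hg.fderiv_right (by simp)
  have hdg2 : HasFDerivAt (fderiv ℝ g) (fderiv ℝ (fderiv ℝ g) p) p :=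
    (h1.differentiable (by simp) p).hasFDerivAt
  have hsymm := second_derivative_symmetric hdg hdg2 v w
  have key : ∀ u : ℝ × ℝ, DD u (DD v g) p = fderiv ℝ (fderiv ℝ g) p u v := by
    intro u
    have : HasFDerivAt (DD v g)
        ((ContinuousLinearMap.apply ℝ ℝ v).comp (fderiv ℝ (fderiv ℝ g) p)) p :=
      (ContinuousLinearMap.apply ℝ ℝ v).hasFDerivAt.comp p hdg2
    simp [DD, this.fderiv]
  rw [key w]
  have : HasFDerivAt (DD w g)
      ((ContinuousLinearMap.apply ℝ ℝ w).comp (fderiv ℝ (fderiv ℝ g) p)) p :=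
    (ContinuousLinearMap.apply ℝ ℝ w).hasFDerivAt.comp p hdg2
  simp [DD, this.fderiv, ← hsymm]

lemma DD_add {g h : ℝ × ℝ → ℝ} {p : ℝ × ℝ}
    (hg : DifferentiableAt ℝ g p) (hh : DifferentiableAt ℝ h p)
    (w : ℝ × ℝ) : DD w (fun q => g q + h q) p = DD w g p + DD w h p := by
  simp [DD, fderiv_fun_add hg hh]

lemma DD_sub {g h : ℝ × ℝ → ℝ} {p : ℝ × ℝ}
    (hg : DifferentiableAt ℝ g p) (hh : DifferentiableAt ℝ h p)
    (w : ℝ × ℝ) : DD w (fun q => g q - h q) p = DD w g p - DD w h p := by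
  simp [DD, fderiv_fun_sub hg hh]

lemma DD_mul {g h : ℝ × ℝ → ℝ} {p : ℝ × ℝ}
    (hg : DifferentiableAt ℝ g p) (hh : DifferentiableAt ℝ h p)
    (w : ℝ × ℝ) : DD w (fun q => g q * h q) p = DD w g p * h p + g p * DD w h p := by
  simp [DD, fderiv_fun_mul hg hh]; ring

lemma DD_const_mul {g : ℝ × ℝ → ℝ} {p : ℝ × ℝ} (hg : DifferentiableAt ℝ g p) (c : ℝ)
    (w : ℝ × ℝ) : DD w (fun q => c * g q) p = c * DD w g p := by
  simp [DD, fderiv_const_mul hg c]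

lemma slice_cont {g : ℝ × ℝ → ℝ} (hg : ContDiff ℝ (⊤ : ℕ∞) g) (t : ℝ) :
    Continuous (fun x => g (x, t)) :=
  hg.continuous.comp (continuous_id.prodMk continuous_const)

lemma hasDerivAt_int (g : ℝ × ℝ → ℝ) (hg : ContDiff ℝ (⊤ : ℕ∞) g) (t₀ : ℝ) :
    HasDerivAt (fun t => ∫ x in (0:ℝ)..(2*π), g (x, t))
      (∫ x in (0:ℝ)..(2*π), DD (0,1) g (x, t₀)) t₀ := by
  have hDc : Continuous (DD (0,1) g) := (DD_contDiff hg _).continuous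
  obtain ⟨C, hC⟩ : ∃ C, ∀ p ∈ (Set.Icc 0 (2*π) ×ˢ Set.Icc (t₀-1) (t₀+1)),
      ‖DD (0,1) g p‖ ≤ C :=
    ((isCompact_Icc.prod isCompact_Icc)).exists_bound_of_continuousOn hDc.continuousOn
  have key := intervalIntegral.hasDerivAt_integral_of_dominated_loc_of_deriv_le
    (F := fun t x => g (x, t)) (F' := fun t x => DD (0,1) g (x, t))
    (x₀ := t₀) (a := 0) (b := 2*π) (bound := fun _ => C) (μ := volume)
    (s := ball t₀ 1) (ball_mem_nhds t₀ one_pos)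
    (Filter.Eventually.of_forall fun t => (slice_cont hg t).aestronglyMeasurable)
    ((slice_cont hg t₀).intervalIntegrable _ _)
    ((hDc.comp (continuous_id.prodMk continuous_const)).aestronglyMeasurable)
    ?_ (intervalIntegrable_const) ?_
  · exact key.2
  · refine Filter.Eventually.of_forall fun x hx t ht => ?_
    apply hC
    constructor
    · have : Set.uIoc (0:ℝ) (2*π) ⊆ Set.Icc 0 (2*π) := by
        rw [Set.uIoc_of_le (by positivity)]; exact Set.Ioc_subset_Icc_self
      exact this hx
    · have := mem_ball_iff_norm.1 ht
      constructor <;> [linarith [abs_le.1 (by simpa [Real.norm_eq_abs] using this.le)] ;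
        linarith [abs_le.1 (by simpa [Real.norm_eq_abs] using this.le)]]
  · refine Filter.Eventually.of_forall fun x _ t _ => ?_
    exact hasDerivAt_slice_t g (hg.differentiable (by simp) _)

lemma integral_pdx_periodic (G : ℝ × ℝ → ℝ) (hG : ContDiff ℝ (⊤ : ℕ∞) G)
    (hper : ∀ x t, G (x + 2*π, t) = G (x, t)) (t : ℝ) :
    (∫ x in (0:ℝ)..(2*π), DD (1,0) G (x, t)) = 0 := by
  have hd : ∀ x : ℝ, HasDerivAt (fun x' => G (x', t)) (DD (1,0) G (x,t)) x :=
    fun x => hasDerivAt_slice_x G (hG.differentiable (by simp) _)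
  have : (∫ x in (0:ℝ)..(2*π), DD (1,0) G (x, t))
      = G (2*π, t) - G (0, t) := by
    refine intervalIntegral.integral_eq_sub_of_hasDerivAt (fun x _ => hd x) ?_
    exact (((DD_contDiff hG _).continuous).comp
      (continuous_id.prodMk continuous_const)).intervalIntegrable _ _
  rw [this]
  have := hper 0 t
  simp at this
  rw [this]; ring

lemma conserved (g G : ℝ × ℝ → ℝ) (hg : ContDiff ℝ (⊤ : ℕ∞) g) (hG : ContDiff ℝ (⊤ : ℕ∞) G)
    (hper : ∀ x t, G (x + 2*π, t) = G (x, t))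
    (hflux : ∀ p, DD (0,1) g p = DD (1,0) G p) (t s : ℝ) :
    (∫ x in (0:ℝ)..(2*π), g (x, t)) = ∫ x in (0:ℝ)..(2*π), g (x, s) := by
  have h : ∀ t₀, HasDerivAt (fun t => ∫ x in (0:ℝ)..(2*π), g (x, t)) 0 t₀ := by
    intro t₀
    have h1 := hasDerivAt_int g hg t₀
    have : (∫ x in (0:ℝ)..(2*π), DD (0,1) g (x, t₀)) = 0 := by
      rw [intervalIntegral.integral_congr (fun x _ => hflux (x, t₀))]
      exact integral_pdx_periodic G hG hper t₀
    rwa [this] at h1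
  exact is_const_of_deriv_eq_zero (fun x => (h x).differentiableAt)
    (fun x => (h x).deriv) t s

lemma DD_per {g : ℝ × ℝ → ℝ} (hg : ContDiff ℝ (⊤ : ℕ∞) g)
    (hper : ∀ x t, g (x + 2*π, t) = g (x, t)) :
    ∀ x t, DD (1,0) g (x + 2*π, t) = DD (1,0) g (x, t) := by
  intro x t
  have h1 : HasDerivAt (fun x' => g (x', t)) (DD (1,0) g (x + 2*π, t)) (x + 2*π) :=
    hasDerivAt_slice_x g (hg.differentiable (by simp) _)
  have h2 : HasDerivAt (fun x' : ℝ => x' + 2*π) 1 x := (hasDerivAt_id x).add_const _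
  have h3 : HasDerivAt (fun x' => g (x' + 2*π, t)) (DD (1,0) g (x + 2*π, t) * 1) x :=
    by have h5 := h1.comp x h2; exact h5
  have h4 : (fun x' => g (x' + 2*π, t)) = fun x' => g (x', t) := funext fun x' => hper x' t
  rw [h4, mul_one] at h3
  exact h3.unique (hasDerivAt_slice_x g (hg.differentiable (by simp) _))

section Flux
variable {u v : ℝ × ℝ → ℝ}

lemma flux2 (hu : ContDiff ℝ (⊤ : ℕ∞) u) (hv : ContDiff ℝ (⊤ : ℕ∞) v)
    (hE2 : ∀ p, DD (0,1) v p
      = (2/3) * (u p * DD (1,0) u p - DD (1,0) (DD (1,0) (DD (1,0) u)) p)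
        - DD (1,0) (DD (1,0) v) p) :
    ∀ p, DD (0,1) v p = DD (1,0)
      (fun q => (1/3) * (u q * u q)
        - ((2/3) * DD (1,0) (DD (1,0) u) q + DD (1,0) v q)) p := by
  intro p
  have du : Differentiable ℝ u := hu.differentiable (by simp)
  have duxx : Differentiable ℝ (DD (1,0) (DD (1,0) u)) :=
    (DD_contDiff (DD_contDiff hu (1,0)) (1,0)).differentiable (by simp)
  have dvx : Differentiable ℝ (DD (1,0) v) :=
    (DD_contDiff hv (1,0)).differentiable (by simp)
  rw [DD_sub (((du.fun_mul du).const_mul _) p) (((duxx.const_mul _).fun_add dvx) p),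
    DD_const_mul ((du.fun_mul du) p), DD_mul (du p) (du p),
    DD_add ((duxx.const_mul _) p) (dvx p), DD_const_mul (duxx p), hE2 p]
  ring

lemma flux3 (hu : ContDiff ℝ (⊤ : ℕ∞) u) (hv : ContDiff ℝ (⊤ : ℕ∞) v)
    (hE1 : ∀ p, DD (0,1) u p = DD (1,0) (DD (1,0) u) p + 2 * DD (1,0) v p)
    (hE2 : ∀ p, DD (0,1) v p
      = (2/3) * (u p * DD (1,0) u p - DD (1,0) (DD (1,0) (DD (1,0) u)) p)
        - DD (1,0) (DD (1,0) v) p) :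
    ∀ p, DD (0,1) (fun q => (1/3) * (DD (1,0) u q * DD (1,0) u q)
        + v q * DD (1,0) u q + v q * v q + (1/9) * (u q * u q * u q)) p
      = DD (1,0) (fun q => (1/3) * (u q * u q * DD (1,0) u q)
        + (2/3) * (u q * u q * v q) + (1/3) * (DD (1,0) u q * DD (1,0) v q)
        - (1/3) * (v q * DD (1,0) (DD (1,0) u) q)) p := by
  intro p
  have du : Differentiable ℝ u := hu.differentiable (by simp)
  have dv : Differentiable ℝ v := hv.differentiable (by simp)
  have dux : Differentiable ℝ (DD (1,0) u) :=
    (DD_contDiff hu (1,0)).differentiable (by simp)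
  have dvx : Differentiable ℝ (DD (1,0) v) :=
    (DD_contDiff hv (1,0)).differentiable (by simp)
  have duxx : Differentiable ℝ (DD (1,0) (DD (1,0) u)) :=
    (DD_contDiff (DD_contDiff hu (1,0)) (1,0)).differentiable (by simp)
  have hswap : DD (0,1) (DD (1,0) u) p
      = DD (1,0) (DD (1,0) (DD (1,0) u)) p + 2 * DD (1,0) (DD (1,0) v) p := by
    have e : DD (0,1) u
        = fun q => DD (1,0) (DD (1,0) u) q + 2 * DD (1,0) v q := funext hE1
    rw [DD_comm hu (1,0) (0,1) p, e, DD_add (duxx p) ((dvx.const_mul _) p),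
      DD_const_mul (dvx p)]
  -- expand the time derivative of the density
  rw [DD_add ((((dux.fun_mul dux).const_mul _).fun_add (dv.fun_mul dux)).fun_add (dv.fun_mul dv) p)
      (((du.fun_mul du).fun_mul du).const_mul _ p),
    DD_add (((dux.fun_mul dux).const_mul _).fun_add (dv.fun_mul dux) p) ((dv.fun_mul dv) p),
    DD_add ((dux.fun_mul dux).const_mul _ p) ((dv.fun_mul dux) p),
    DD_const_mul ((dux.fun_mul dux) p), DD_mul (dux p) (dux p),
    DD_mul (dv p) (dux p), DD_mul (dv p) (dv p),
    DD_const_mul (((du.fun_mul du).fun_mul du) p), DD_mul ((du.fun_mul du) p) (du p),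
    DD_mul (du p) (du p)]
  -- expand the space derivative of the flux
  rw [DD_sub (((((du.fun_mul du).fun_mul dux).const_mul _).fun_add
        (((du.fun_mul du).fun_mul dv).const_mul _)).fun_add ((dux.fun_mul dvx).const_mul _) p)
      ((dv.fun_mul duxx).const_mul _ p),
    DD_add ((((du.fun_mul du).fun_mul dux).const_mul _).fun_add
        (((du.fun_mul du).fun_mul dv).const_mul _) p) ((dux.fun_mul dvx).const_mul _ p),
    DD_add (((du.fun_mul du).fun_mul dux).const_mul _ p) (((du.fun_mul du).fun_mul dv).const_mul _ p),
    DD_const_mul (((du.fun_mul du).fun_mul dux) p), DD_mul ((du.fun_mul du) p) (dux p),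
    DD_const_mul (((du.fun_mul du).fun_mul dv) p), DD_mul ((du.fun_mul du) p) (dv p),
    DD_const_mul ((dux.fun_mul dvx) p), DD_mul (dux p) (dvx p),
    DD_const_mul ((dv.fun_mul duxx) p), DD_mul (dv p) (duxx p),
    DD_mul (du p) (du p)]
  rw [hswap, hE1 p, hE2 p]
  ring

end Flux
/-- For `x`-periodic solutions of the Boussinesq curvature system
`(k₁)_t = k₁'' + 2k₂'`, `(k₂)_t = (2/3)(k₁k₁' − k₁''') − k₂''`, the integrals
`∮ k₁ dx`, `∮ k₂ dx`, and `∮ ρ₃ dx` with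
`ρ₃ = (1/3)(k₁')² + k₂k₁' + k₂² + (1/9)k₁³` are conserved in time. -/
theorem boussinesq_conserved_densities
    (k₁ k₂ : ℝ → ℝ → ℝ)
    (hk₁ : ContDiff ℝ (⊤ : ℕ∞) (fun p : ℝ × ℝ => k₁ p.1 p.2))
    (hk₂ : ContDiff ℝ (⊤ : ℕ∞) (fun p : ℝ × ℝ => k₂ p.1 p.2))
    (hper₁ : ∀ x t, k₁ (x + 2 * Real.pi) t = k₁ x t)
    (hper₂ : ∀ x t, k₂ (x + 2 * Real.pi) t = k₂ x t)
    (hev₁ : ∀ x t, pdt k₁ x t = pdx (pdx k₁) x t + 2 * pdx k₂ x t)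
    (hev₂ : ∀ x t, pdt k₂ x t
        = (2/3) * (k₁ x t * pdx k₁ x t - pdx (pdx (pdx k₁)) x t) - pdx (pdx k₂) x t) :
    (∀ t s : ℝ, (∫ x in (0:ℝ)..(2 * Real.pi), k₁ x t)
        = ∫ x in (0:ℝ)..(2 * Real.pi), k₁ x s) ∧
    (∀ t s : ℝ, (∫ x in (0:ℝ)..(2 * Real.pi), k₂ x t)
        = ∫ x in (0:ℝ)..(2 * Real.pi), k₂ x s) ∧
    (∀ t s : ℝ,
      (∫ x in (0:ℝ)..(2 * Real.pi),
        ((1/3) * (pdx k₁ x t)^2 + k₂ x t * pdx k₁ x t + (k₂ x t)^2 + (1/9) * (k₁ x t)^3))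
      = ∫ x in (0:ℝ)..(2 * Real.pi),
        ((1/3) * (pdx k₁ x s)^2 + k₂ x s * pdx k₁ x s + (k₂ x s)^2 + (1/9) * (k₁ x s)^3)) := by
  have hU : ContDiff ℝ (⊤ : ℕ∞) (unc k₁) := hk₁
  have hV : ContDiff ℝ (⊤ : ℕ∞) (unc k₂) := hk₂
  have hperU : ∀ x t, unc k₁ (x + 2*π, t) = unc k₁ (x, t) := hper₁
  have hperV : ∀ x t, unc k₂ (x + 2*π, t) = unc k₂ (x, t) := hper₂
  have cUx : ContDiff ℝ (⊤ : ℕ∞) (DD (1,0) (unc k₁)) := DD_contDiff hU _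
  have cUxx : ContDiff ℝ (⊤ : ℕ∞) (DD (1,0) (DD (1,0) (unc k₁))) := DD_contDiff cUx _
  have cVx : ContDiff ℝ (⊤ : ℕ∞) (DD (1,0) (unc k₂)) := DD_contDiff hV _
  -- conversions between curried partial derivatives and DD
  have hpdx1 : ∀ x t, pdx k₁ x t = DD (1,0) (unc k₁) (x,t) := fun x t =>
    (hasDerivAt_slice_x (unc k₁) (hU.differentiable (by simp) (x,t))).deriv
  have hpdxv : ∀ x t, pdx k₂ x t = DD (1,0) (unc k₂) (x,t) := fun x t =>
    (hasDerivAt_slice_x (unc k₂) (hV.differentiable (by simp) (x,t))).deriv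
  have hpdt1 : ∀ x t, pdt k₁ x t = DD (0,1) (unc k₁) (x,t) := fun x t =>
    (hasDerivAt_slice_t (unc k₁) (hU.differentiable (by simp) (x,t))).deriv
  have hpdtv : ∀ x t, pdt k₂ x t = DD (0,1) (unc k₂) (x,t) := fun x t =>
    (hasDerivAt_slice_t (unc k₂) (hV.differentiable (by simp) (x,t))).deriv
  have hpdx2 : ∀ x t, pdx (pdx k₁) x t = DD (1,0) (DD (1,0) (unc k₁)) (x,t) := by
    intro x t
    have e : (fun x' => pdx k₁ x' t) = (fun x' => DD (1,0) (unc k₁) (x', t)) :=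
      funext fun x' => hpdx1 x' t
    calc pdx (pdx k₁) x t = deriv (fun x' => pdx k₁ x' t) x := rfl
      _ = deriv (fun x' => DD (1,0) (unc k₁) (x',t)) x := by rw [e]
      _ = DD (1,0) (DD (1,0) (unc k₁)) (x,t) :=
        (hasDerivAt_slice_x _ (cUx.differentiable (by simp) _)).deriv
  have hpdx2v : ∀ x t, pdx (pdx k₂) x t = DD (1,0) (DD (1,0) (unc k₂)) (x,t) := by
    intro x t
    have e : (fun x' => pdx k₂ x' t) = (fun x' => DD (1,0) (unc k₂) (x', t)) :=
      funext fun x' => hpdxv x' t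
    calc pdx (pdx k₂) x t = deriv (fun x' => pdx k₂ x' t) x := rfl
      _ = deriv (fun x' => DD (1,0) (unc k₂) (x',t)) x := by rw [e]
      _ = DD (1,0) (DD (1,0) (unc k₂)) (x,t) :=
        (hasDerivAt_slice_x _ (cVx.differentiable (by simp) _)).deriv
  have hpdx3 : ∀ x t, pdx (pdx (pdx k₁)) x t
      = DD (1,0) (DD (1,0) (DD (1,0) (unc k₁))) (x,t) := by
    intro x t
    have e : (fun x' => pdx (pdx k₁) x' t)
        = (fun x' => DD (1,0) (DD (1,0) (unc k₁)) (x', t)) :=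
      funext fun x' => hpdx2 x' t
    calc pdx (pdx (pdx k₁)) x t = deriv (fun x' => pdx (pdx k₁) x' t) x := rfl
      _ = deriv (fun x' => DD (1,0) (DD (1,0) (unc k₁)) (x',t)) x := by rw [e]
      _ = DD (1,0) (DD (1,0) (DD (1,0) (unc k₁))) (x,t) :=
        (hasDerivAt_slice_x _ (cUxx.differentiable (by simp) _)).deriv
  -- evolution equations, in DD form
  have hE1 : ∀ p : ℝ × ℝ, DD (0,1) (unc k₁) p
      = DD (1,0) (DD (1,0) (unc k₁)) p + 2 * DD (1,0) (unc k₂) p := by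
    rintro ⟨x, t⟩
    have h := hev₁ x t
    rwa [hpdt1, hpdx2, hpdxv] at h
  have hE2 : ∀ p : ℝ × ℝ, DD (0,1) (unc k₂) p
      = (2/3) * (unc k₁ p * DD (1,0) (unc k₁) p
          - DD (1,0) (DD (1,0) (DD (1,0) (unc k₁))) p)
        - DD (1,0) (DD (1,0) (unc k₂)) p := by
    rintro ⟨x, t⟩
    have h := hev₂ x t
    rwa [hpdtv, hpdx1, hpdx3, hpdx2v] at h
  -- periodicity of the derived quantities
  have hperUx : ∀ x t, DD (1,0) (unc k₁) (x + 2*π, t) = DD (1,0) (unc k₁) (x, t) :=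
    DD_per hU hperU
  have hperUxx : ∀ x t, DD (1,0) (DD (1,0) (unc k₁)) (x + 2*π, t)
      = DD (1,0) (DD (1,0) (unc k₁)) (x, t) := DD_per cUx hperUx
  have hperVx : ∀ x t, DD (1,0) (unc k₂) (x + 2*π, t) = DD (1,0) (unc k₂) (x, t) :=
    DD_per hV hperV
  refine ⟨?_, ?_, ?_⟩
  · -- conservation of ∮ k₁
    intro t s
    exact conserved (unc k₁) (fun q => DD (1,0) (unc k₁) q + 2 * unc k₂ q) hU
      (cUx.add (contDiff_const.mul hV))
      (fun x t => by simp only [hperUx, hperV])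
      (fun p => by
        rw [hE1 p, DD_add ((cUx.differentiable (by simp)) p)
            (((hV.differentiable (by simp)).const_mul _) p),
          DD_const_mul ((hV.differentiable (by simp)) p)])
      t s
  · -- conservation of ∮ k₂
    intro t s
    exact conserved (unc k₂)
      (fun q => (1/3) * (unc k₁ q * unc k₁ q)
        - ((2/3) * DD (1,0) (DD (1,0) (unc k₁)) q + DD (1,0) (unc k₂) q))
      hV
      ((contDiff_const.mul (hU.mul hU)).sub ((contDiff_const.mul cUxx).add cVx))
      (fun x t => by simp only [hperU, hperUxx, hperVx])
      (flux2 hU hV hE2) t s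
  · -- conservation of ∮ ρ₃
    intro t s
    have key := conserved
      (fun q => (1/3) * (DD (1,0) (unc k₁) q * DD (1,0) (unc k₁) q)
        + unc k₂ q * DD (1,0) (unc k₁) q + unc k₂ q * unc k₂ q
        + (1/9) * (unc k₁ q * unc k₁ q * unc k₁ q))
      (fun q => (1/3) * (unc k₁ q * unc k₁ q * DD (1,0) (unc k₁) q)
        + (2/3) * (unc k₁ q * unc k₁ q * unc k₂ q)
        + (1/3) * (DD (1,0) (unc k₁) q * DD (1,0) (unc k₂) q)
        - (1/3) * (unc k₂ q * DD (1,0) (DD (1,0) (unc k₁)) q))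
      ((((contDiff_const.mul (cUx.mul cUx)).add (hV.mul cUx)).add (hV.mul hV)).add
        (contDiff_const.mul ((hU.mul hU).mul hU)))
      ((((contDiff_const.mul ((hU.mul hU).mul cUx)).add
          (contDiff_const.mul ((hU.mul hU).mul hV))).add
          (contDiff_const.mul (cUx.mul cVx))).sub (contDiff_const.mul (hV.mul cUxx)))
      (fun x t => by simp only [hperU, hperV, hperUx, hperUxx, hperVx])
      (flux3 hU hV hE1 hE2) t s
    have conv : ∀ r : ℝ,
        (∫ x in (0:ℝ)..(2*π),
          ((1/3) * (pdx k₁ x r)^2 + k₂ x r * pdx k₁ x r + (k₂ x r)^2 + (1/9) * (k₁ x r)^3))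
        = ∫ x in (0:ℝ)..(2*π),
          ((1/3) * (DD (1,0) (unc k₁) (x,r) * DD (1,0) (unc k₁) (x,r))
            + unc k₂ (x,r) * DD (1,0) (unc k₁) (x,r) + unc k₂ (x,r) * unc k₂ (x,r)
            + (1/9) * (unc k₁ (x,r) * unc k₁ (x,r) * unc k₁ (x,r))) := by
      intro r
      refine intervalIntegral.integral_congr fun x _ => ?_
      rw [hpdx1 x r]
      show (1/3) * (DD (1,0) (unc k₁) (x,r))^2 + k₂ x r * DD (1,0) (unc k₁) (x,r)
          + (k₂ x r)^2 + (1/9) * (k₁ x r)^3 = _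
      show _ = (1/3) * (DD (1,0) (unc k₁) (x,r) * DD (1,0) (unc k₁) (x,r))
          + k₂ x r * DD (1,0) (unc k₁) (x,r) + k₂ x r * k₂ x r
          + (1/9) * (k₁ x r * k₁ x r * k₁ x r)
      ring
    rw [conv t, conv s]
    exact key
end

section
/- Let Γ: ℝ × ℝ → ℝ³ be a smooth family such that for each t the curve Γ(·, t) is parametrized by centroaffine arclength, and suppose Γ satisfies the curve flow Γ_t = k₁Γ'' + k₂Γ' + r₀Γ with r₀ = −(k₂' + (1/3)(k₁'' + 2k₁²)). Then the curvatures evolve by (k₁)_t = −k₁'''' − 2k₂''' + 2k₁k₁'' + 2(k₁')² + 4(k₁k₂)' and (k₂)_t = D((2/3)k₁'''' + k₂''' − 2k₁k₁'' − (k₁')² − 2k₁k₂' + (4/9)k₁³ + 2k₂²). In particular, if Γ is 2π-periodic in x then ∫₀^{2π} k₂ dx is constant in t. -/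
/-- `det3 u v w` is the determinant of the 3×3 matrix with columns (equivalently, rows)
`u`, `v`, `w` in `ℝ³`. -/
noncomputable def det3 (u v w : Fin 3 → ℝ) : ℝ := Matrix.det (Matrix.of ![u, v, w])

section Infra

variable {E : Type*} [NormedAddCommGroup E] [NormedSpace ℝ E]

def Sm (f : ℝ → ℝ → E) : Prop := ContDiff ℝ (⊤ : ℕ∞) (fun p : ℝ × ℝ => f p.1 p.2)

theorem HasDerivAt.congr_d {f : ℝ → E} {a b : E} {x : ℝ}
    (h : HasDerivAt f a x) (hab : a = b) : HasDerivAt f b x := hab ▸ h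

theorem Sm.hdx {f : ℝ → ℝ → E} (hf : Sm f) (x t : ℝ) :
    HasDerivAt (fun x' => f x' t) (pdx f x t) x := by
  have hF : DifferentiableAt ℝ (fun p : ℝ × ℝ => f p.1 p.2) (x, t) :=
    (hf.differentiable (by simp)).differentiableAt
  have h1 : HasDerivAt (fun x' : ℝ => ((x' : ℝ), t)) ((1 : ℝ), (0 : ℝ)) x :=
    HasDerivAt.prodMk (hasDerivAt_id x) (hasDerivAt_const x t)
  have h2 : HasDerivAt (fun x' => f x' t)
      (fderiv ℝ (fun p : ℝ × ℝ => f p.1 p.2) (x, t) (1, 0)) x := by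
    have h2' := hF.hasFDerivAt.comp_hasDerivAt x h1
    exact h2'
  have h3 : pdx f x t = fderiv ℝ (fun p : ℝ × ℝ => f p.1 p.2) (x, t) (1, 0) := h2.deriv
  exact h2.congr_d h3.symm

theorem Sm.hdt {f : ℝ → ℝ → E} (hf : Sm f) (x t : ℝ) :
    HasDerivAt (fun t' => f x t') (pdt f x t) t := by
  have hF : DifferentiableAt ℝ (fun p : ℝ × ℝ => f p.1 p.2) (x, t) :=
    (hf.differentiable (by simp)).differentiableAt
  have h1 : HasDerivAt (fun t' : ℝ => ((x : ℝ), t')) ((0 : ℝ), (1 : ℝ)) t :=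
    HasDerivAt.prodMk (hasDerivAt_const t x) (hasDerivAt_id t)
  have h2 : HasDerivAt (fun t' => f x t')
      (fderiv ℝ (fun p : ℝ × ℝ => f p.1 p.2) (x, t) (0, 1)) t :=
    hF.hasFDerivAt.comp_hasDerivAt t h1
  exact h2.congr_d h2.deriv.symm

theorem pdx_eq {f : ℝ → ℝ → E} (hf : Sm f) (x t : ℝ) :
    pdx f x t = fderiv ℝ (fun p : ℝ × ℝ => f p.1 p.2) (x, t) (1, 0) := by
  have hF : DifferentiableAt ℝ (fun p : ℝ × ℝ => f p.1 p.2) (x, t) :=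
    (hf.differentiable (by simp)).differentiableAt
  have h1 : HasDerivAt (fun x' : ℝ => ((x' : ℝ), t)) ((1 : ℝ), (0 : ℝ)) x :=
    HasDerivAt.prodMk (hasDerivAt_id x) (hasDerivAt_const x t)
  exact (hF.hasFDerivAt.comp_hasDerivAt x h1).deriv

theorem pdt_eq {f : ℝ → ℝ → E} (hf : Sm f) (x t : ℝ) :
    pdt f x t = fderiv ℝ (fun p : ℝ × ℝ => f p.1 p.2) (x, t) (0, 1) := by
  have hF : DifferentiableAt ℝ (fun p : ℝ × ℝ => f p.1 p.2) (x, t) :=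
    (hf.differentiable (by simp)).differentiableAt
  have h1 : HasDerivAt (fun t' : ℝ => ((x : ℝ), t')) ((0 : ℝ), (1 : ℝ)) t :=
    HasDerivAt.prodMk (hasDerivAt_const t x) (hasDerivAt_id t)
  exact (hF.hasFDerivAt.comp_hasDerivAt t h1).deriv

theorem Sm.px {f : ℝ → ℝ → E} (hf : Sm f) : Sm (pdx f) := by
  have h : (fun p : ℝ × ℝ => pdx f p.1 p.2)
      = fun p : ℝ × ℝ => fderiv ℝ (fun p : ℝ × ℝ => f p.1 p.2) p (1, 0) := by
    funext p
    exact pdx_eq hf p.1 p.2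
  rw [Sm, h]
  exact (hf.fderiv_right (by simp)).clm_apply contDiff_const

theorem Sm.pt {f : ℝ → ℝ → E} (hf : Sm f) : Sm (pdt f) := by
  have h : (fun p : ℝ × ℝ => pdt f p.1 p.2)
      = fun p : ℝ × ℝ => fderiv ℝ (fun p : ℝ × ℝ => f p.1 p.2) p (0, 1) := by
    funext p
    exact pdt_eq hf p.1 p.2
  rw [Sm, h]
  exact (hf.fderiv_right (by simp)).clm_apply contDiff_const

theorem Sm.comm {f : ℝ → ℝ → E} (hf : Sm f) (x t : ℝ) :
    pdt (pdx f) x t = pdx (pdt f) x t := by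
  set F := fun p : ℝ × ℝ => f p.1 p.2 with hFdef
  have hF' : ContDiff ℝ (⊤ : ℕ∞) (fderiv ℝ F) := hf.fderiv_right (by simp)
  have h1 : ∀ p, HasFDerivAt F (fderiv ℝ F p) p := fun p =>
    ((hf.differentiable (by simp)) p).hasFDerivAt
  have h2 : HasFDerivAt (fderiv ℝ F) (fderiv ℝ (fderiv ℝ F) (x, t)) (x, t) :=
    ((hF'.differentiable (by simp)) (x, t)).hasFDerivAt
  have hsym := second_derivative_symmetric h1 h2 (1, 0) (0, 1)
  -- pdt (pdx f) x t
  have e1 : pdt (pdx f) x t = fderiv ℝ (fderiv ℝ F) (x, t) (0, 1) (1, 0) := by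
    have hx : (fun t' => pdx f x t') = fun t' => fderiv ℝ F (x, t') (1, 0) := by
      funext t'
      exact pdx_eq hf x t'
    have h3 : HasDerivAt (fun t' : ℝ => ((x : ℝ), t')) ((0 : ℝ), (1 : ℝ)) t :=
      HasDerivAt.prodMk (hasDerivAt_const t x) (hasDerivAt_id t)
    have h4 : HasFDerivAt (fun p : ℝ × ℝ => fderiv ℝ F p (1, 0))
        (((fderiv ℝ F (x, t)).comp (0 : ℝ × ℝ →L[ℝ] ℝ × ℝ))
          + (fderiv ℝ (fderiv ℝ F) (x, t)).flip (1, 0)) (x, t) :=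
      h2.clm_apply (hasFDerivAt_const _ _)
    have h5 := h4.comp_hasDerivAt t h3
    have : pdt (pdx f) x t = deriv (fun t' => fderiv ℝ F (x, t') (1, 0)) t := by
      show deriv (fun t' => pdx f x t') t = _
      rw [hx]
    rw [this]
    have h6 := h5.deriv
    simp only [Function.comp_def] at h6
    rw [h6]
    simp
  have e2 : pdx (pdt f) x t = fderiv ℝ (fderiv ℝ F) (x, t) (1, 0) (0, 1) := by
    have hx : (fun x' => pdt f x' t) = fun x' => fderiv ℝ F (x', t) (0, 1) := by
      funext x'
      exact pdt_eq hf x' t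
    have h3 : HasDerivAt (fun x' : ℝ => ((x' : ℝ), t)) ((1 : ℝ), (0 : ℝ)) x :=
      HasDerivAt.prodMk (hasDerivAt_id x) (hasDerivAt_const x t)
    have h4 : HasFDerivAt (fun p : ℝ × ℝ => fderiv ℝ F p (0, 1))
        (((fderiv ℝ F (x, t)).comp (0 : ℝ × ℝ →L[ℝ] ℝ × ℝ))
          + (fderiv ℝ (fderiv ℝ F) (x, t)).flip (0, 1)) (x, t) :=
      h2.clm_apply (hasFDerivAt_const _ _)
    have h5 := h4.comp_hasDerivAt x h3
    have : pdx (pdt f) x t = deriv (fun x' => fderiv ℝ F (x', t) (0, 1)) x := by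
      show deriv (fun x' => pdt f x' t) x = _
      rw [hx]
    rw [this]
    have h6 := h5.deriv
    simp only [Function.comp_def] at h6
    rw [h6]
    simp
  rw [e1, e2, hsym]

theorem Sm.contSliceX {f : ℝ → ℝ → E} (hf : Sm f) (t : ℝ) :
    Continuous fun x => f x t :=
  hf.continuous.comp (continuous_id.prodMk continuous_const)

theorem Sm.hdxPi {f : ℝ → ℝ → Fin 3 → ℝ} (hf : Sm f) (x t : ℝ) (i : Fin 3) :
    HasDerivAt (fun x' => f x' t i) (pdx f x t i) x :=
  (ContinuousLinearMap.proj (R := ℝ) (φ := fun _ : Fin 3 => ℝ) i).hasFDerivAt.comp_hasDerivAt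
    x (hf.hdx x t)

theorem Sm.hdtPi {f : ℝ → ℝ → Fin 3 → ℝ} (hf : Sm f) (x t : ℝ) (i : Fin 3) :
    HasDerivAt (fun t' => f x t' i) (pdt f x t i) t :=
  (ContinuousLinearMap.proj (R := ℝ) (φ := fun _ : Fin 3 => ℝ) i).hasFDerivAt.comp_hasDerivAt
    t (hf.hdt x t)

end Infra

section Scal

theorem Sm.add {f g : ℝ → ℝ → ℝ} (hf : Sm f) (hg : Sm g) :
    Sm (fun x t => f x t + g x t) := ContDiff.add hf hg

theorem Sm.sub {f g : ℝ → ℝ → ℝ} (hf : Sm f) (hg : Sm g) :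
    Sm (fun x t => f x t - g x t) := ContDiff.sub hf hg

theorem Sm.mul {f g : ℝ → ℝ → ℝ} (hf : Sm f) (hg : Sm g) :
    Sm (fun x t => f x t * g x t) := ContDiff.mul hf hg

theorem Sm.neg {f : ℝ → ℝ → ℝ} (hf : Sm f) : Sm (fun x t => -f x t) := ContDiff.neg hf

theorem Sm.cmul {f : ℝ → ℝ → ℝ} (c : ℝ) (hf : Sm f) :
    Sm (fun x t => c * f x t) := ContDiff.mul contDiff_const hf

theorem Sm.proj {f : ℝ → ℝ → Fin 3 → ℝ} (hf : Sm f) (i : Fin 3) :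
    Sm (fun x t => f x t i) :=
  (ContinuousLinearMap.proj (R := ℝ) (φ := fun _ : Fin 3 => ℝ) i).contDiff.comp hf

theorem det3_eq (u v w : Fin 3 → ℝ) :
    det3 u v w = u 0 * v 1 * w 2 - u 0 * v 2 * w 1 - u 1 * v 0 * w 2
      + u 1 * v 2 * w 0 + u 2 * v 0 * w 1 - u 2 * v 1 * w 0 := by
  simp [det3, Matrix.det_fin_three]

theorem Sm.det3' {u v w : ℝ → ℝ → Fin 3 → ℝ} (hu : Sm u) (hv : Sm v) (hw : Sm w) :
    Sm (fun x t => det3 (u x t) (v x t) (w x t)) := by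
  have h : (fun x t => det3 (u x t) (v x t) (w x t))
      = fun x t => u x t 0 * v x t 1 * w x t 2 - u x t 0 * v x t 2 * w x t 1
        - u x t 1 * v x t 0 * w x t 2 + u x t 1 * v x t 2 * w x t 0
        + u x t 2 * v x t 0 * w x t 1 - u x t 2 * v x t 1 * w x t 0 := by
    funext x t
    exact det3_eq _ _ _
  rw [h]
  exact ((((((hu.proj 0).mul (hv.proj 1)).mul (hw.proj 2)).sub
    (((hu.proj 0).mul (hv.proj 2)).mul (hw.proj 1))).sub
    (((hu.proj 1).mul (hv.proj 0)).mul (hw.proj 2))).add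
    (((hu.proj 1).mul (hv.proj 2)).mul (hw.proj 0))).add
    (((hu.proj 2).mul (hv.proj 0)).mul (hw.proj 1)) |>.sub
    (((hu.proj 2).mul (hv.proj 1)).mul (hw.proj 0))

theorem hasDerivAt_det3 {u v w : ℝ → Fin 3 → ℝ} {u' v' w' : Fin 3 → ℝ} {x : ℝ}
    (hu : ∀ i, HasDerivAt (fun s => u s i) (u' i) x)
    (hv : ∀ i, HasDerivAt (fun s => v s i) (v' i) x)
    (hw : ∀ i, HasDerivAt (fun s => w s i) (w' i) x) :
    HasDerivAt (fun s => det3 (u s) (v s) (w s))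
      (det3 u' (v x) (w x) + det3 (u x) v' (w x) + det3 (u x) (v x) w') x := by
  have h : (fun s => det3 (u s) (v s) (w s))
      = fun s => u s 0 * v s 1 * w s 2 - u s 0 * v s 2 * w s 1
        - u s 1 * v s 0 * w s 2 + u s 1 * v s 2 * w s 0
        + u s 2 * v s 0 * w s 1 - u s 2 * v s 1 * w s 0 := by
    funext s
    exact det3_eq _ _ _
  rw [h]
  exact (((((((hu 0).mul (hv 1)).mul (hw 2)).sub
    (((hu 0).mul (hv 2)).mul (hw 1))).sub
    (((hu 1).mul (hv 0)).mul (hw 2))).add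
    (((hu 1).mul (hv 2)).mul (hw 0))).add
    (((hu 2).mul (hv 0)).mul (hw 1)) |>.sub
    (((hu 2).mul (hv 1)).mul (hw 0))).congr_d
    (by rw [det3_eq, det3_eq, det3_eq]; simp only [Pi.add_apply, Pi.sub_apply, Pi.mul_apply]; ring)

theorem pdx_per {E : Type*} [NormedAddCommGroup E] [NormedSpace ℝ E]
    {f : ℝ → ℝ → E} {c : ℝ} (h : ∀ x t, f (x + c) t = f x t) :
    ∀ x t, pdx f (x + c) t = pdx f x t := by
  intro x t
  have hfe : (fun x' => f (x' + c) t) = fun x' => f x' t := funext fun y => h y t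
  calc pdx f (x + c) t = deriv (fun x' => f x' t) (x + c) := rfl
    _ = deriv (fun x' => f (x' + c) t) x := (deriv_comp_add_const _ c x).symm
    _ = pdx f x t := by rw [hfe]; rfl


theorem det3_alt12 (u w : Fin 3 → ℝ) : det3 u u w = 0 := by
  rw [det3_eq]; ring

theorem det3_alt23 (u v : Fin 3 → ℝ) : det3 u v v = 0 := by
  rw [det3_eq]; ring

/-- Under the second centroaffine curve flow `Γ_t = k₁Γ'' + k₂Γ' + r₀Γ` with
`r₀ = −(k₂' + (1/3)(k₁'' + 2k₁²))`, the curvatures evolve by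
`(k₁)_t = −k₁'''' − 2k₂''' + 2k₁k₁'' + 2(k₁')² + 4(k₁k₂)'` and
`(k₂)_t = D((2/3)k₁'''' + k₂''' − 2k₁k₁'' − (k₁')² − 2k₁k₂' + (4/9)k₁³ + 2k₂²)`;
in particular, in the `2π`-periodic case `∮ k₂ dx` is conserved. -/
theorem second_flow_curvature_evolution
    (Γ : ℝ → ℝ → Fin 3 → ℝ)
    (hΓ : ContDiff ℝ (⊤ : ℕ∞) (fun p : ℝ × ℝ => Γ p.1 p.2))
    (harc : ∀ x t, det3 (Γ x t) (pdx Γ x t) (pdx (pdx Γ) x t) = 1)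
    (p₀ p₁ k₁ k₂ : ℝ → ℝ → ℝ)
    (hp₀ : ∀ x t, p₀ x t = det3 (pdx (pdx (pdx Γ)) x t) (pdx Γ x t) (pdx (pdx Γ) x t))
    (hp₁ : ∀ x t, p₁ x t = det3 (Γ x t) (pdx (pdx (pdx Γ)) x t) (pdx (pdx Γ) x t))
    (hk₁ : ∀ x t, k₁ x t = p₁ x t)
    (hk₂ : ∀ x t, k₂ x t = p₀ x t - pdx p₁ x t)
    (r₀ : ℝ → ℝ → ℝ)
    (hr₀ : ∀ x t, r₀ x t
        = -(pdx k₂ x t + (1/3) * (pdx (pdx k₁) x t + 2 * (k₁ x t)^2)))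
    (hflow : ∀ x t, pdt Γ x t
        = k₁ x t • pdx (pdx Γ) x t + k₂ x t • pdx Γ x t + r₀ x t • Γ x t) :
    (∀ x t, pdt k₁ x t
        = -pdx (pdx (pdx (pdx k₁))) x t - 2 * pdx (pdx (pdx k₂)) x t
          + 2 * k₁ x t * pdx (pdx k₁) x t + 2 * (pdx k₁ x t)^2
          + 4 * pdx (fun x t => k₁ x t * k₂ x t) x t) ∧
    (∀ x t, pdt k₂ x t
        = pdx (fun x t => (2/3) * pdx (pdx (pdx (pdx k₁))) x t + pdx (pdx (pdx k₂)) x t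
            - 2 * k₁ x t * pdx (pdx k₁) x t - (pdx k₁ x t)^2
            - 2 * k₁ x t * pdx k₂ x t + (4/9) * (k₁ x t)^3 + 2 * (k₂ x t)^2) x t) ∧
    ((∀ x t, Γ (x + 2 * Real.pi) t = Γ x t) →
      ∀ t s : ℝ, (∫ x in (0:ℝ)..(2 * Real.pi), k₂ x t)
        = ∫ x in (0:ℝ)..(2 * Real.pi), k₂ x s) := by
  have sΓ : Sm Γ := hΓ
  have sΓ1 : Sm (pdx Γ) := sΓ.px
  have sΓ2 : Sm (pdx (pdx Γ)) := sΓ1.px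
  have sΓ3 : Sm (pdx (pdx (pdx Γ))) := sΓ2.px
  have hk₁' : k₁ = p₁ := funext fun x => funext fun t => hk₁ x t
  have hk₂' : k₂ = fun x t => p₀ x t - pdx p₁ x t := funext fun x => funext fun t => hk₂ x t
  have hr₀' : r₀ = fun x t => -(pdx k₂ x t + (1/3) * (pdx (pdx k₁) x t + 2 * (k₁ x t)^2)) :=
    funext fun x => funext fun t => hr₀ x t
  have hp₁f : p₁ = fun x t => det3 (Γ x t) (pdx (pdx (pdx Γ)) x t) (pdx (pdx Γ) x t) :=
    funext fun x => funext fun t => hp₁ x t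
  have hp₀f : p₀ = fun x t => det3 (pdx (pdx (pdx Γ)) x t) (pdx Γ x t) (pdx (pdx Γ) x t) :=
    funext fun x => funext fun t => hp₀ x t
  have sp₁ : Sm p₁ := by rw [hp₁f]; exact sΓ.det3' sΓ3 sΓ2
  have sp₀ : Sm p₀ := by rw [hp₀f]; exact sΓ3.det3' sΓ1 sΓ2
  have hz : ∀ x t, det3 (Γ x t) (pdx Γ x t) (pdx (pdx (pdx Γ)) x t) = 0 := by
    intro x t
    have hC : HasDerivAt (fun x' => det3 (Γ x' t) (pdx Γ x' t) (pdx (pdx Γ) x' t)) 0 x := by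
      have he : (fun x' => det3 (Γ x' t) (pdx Γ x' t) (pdx (pdx Γ) x' t)) = fun _ => (1:ℝ) :=
        funext fun y => harc y t
      rw [he]; exact hasDerivAt_const x 1
    have hD := hasDerivAt_det3 (u := fun x' => Γ x' t) (v := fun x' => pdx Γ x' t)
      (w := fun x' => pdx (pdx Γ) x' t)
      (fun i => sΓ.hdxPi x t i) (fun i => sΓ1.hdxPi x t i) (fun i => sΓ2.hdxPi x t i)
    have hE := hC.unique hD
    rw [det3_alt12, det3_alt23] at hE
    linarith [hE]
  have hFv : ∀ x t, pdx (pdx (pdx Γ)) x t = p₀ x t • Γ x t + p₁ x t • pdx Γ x t := by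
    intro x t
    funext i
    have hdetE := harc x t
    have hzE := hz x t
    have hp0E := hp₀ x t
    have hp1E := hp₁ x t
    rw [det3_eq] at hdetE hzE hp0E hp1E
    simp only [Pi.add_apply, Pi.smul_apply, smul_eq_mul]
    fin_cases i
    · show pdx (pdx (pdx Γ)) x t 0 = p₀ x t * Γ x t 0 + p₁ x t * pdx Γ x t 0
      linear_combination (-(pdx (pdx (pdx Γ)) x t 0)) * hdetE - Γ x t 0 * hp0E
        - pdx Γ x t 0 * hp1E + pdx (pdx Γ) x t 0 * hzE
    · show pdx (pdx (pdx Γ)) x t 1 = p₀ x t * Γ x t 1 + p₁ x t * pdx Γ x t 1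
      linear_combination (-(pdx (pdx (pdx Γ)) x t 1)) * hdetE - Γ x t 1 * hp0E
        - pdx Γ x t 1 * hp1E + pdx (pdx Γ) x t 1 * hzE
    · show pdx (pdx (pdx Γ)) x t 2 = p₀ x t * Γ x t 2 + p₁ x t * pdx Γ x t 2
      linear_combination (-(pdx (pdx (pdx Γ)) x t 2)) * hdetE - Γ x t 2 * hp0E
        - pdx Γ x t 2 * hp1E + pdx (pdx Γ) x t 2 * hzE
  simp only [hk₁', hk₂', hr₀'] at hflow
  have E1 : ∀ x t, pdx (fun x t => p₀ x t - pdx p₁ x t) x t = pdx p₀ x t - pdx (pdx p₁) x t :=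
    fun x t => ((sp₀.hdx x t).sub ((sp₁.px).hdx x t)).deriv
  have E2 : ∀ x t, pdx (fun x t => pdx p₀ x t - pdx (pdx p₁) x t) x t
      = pdx (pdx p₀) x t - pdx (pdx (pdx p₁)) x t :=
    fun x t => (((sp₀.px).hdx x t).sub ((sp₁.px.px).hdx x t)).deriv
  have E3p : ∀ x t, pdx (fun x t => pdx (pdx p₀) x t - pdx (pdx (pdx p₁)) x t) x t
      = pdx (pdx (pdx p₀)) x t - pdx (pdx (pdx (pdx p₁))) x t :=
    fun x t => (((sp₀.px.px).hdx x t).sub ((sp₁.px.px.px).hdx x t)).deriv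
  have F1 : pdx (fun x t => p₀ x t - pdx p₁ x t) = fun x t => pdx p₀ x t - pdx (pdx p₁) x t :=
    funext fun x => funext fun t => E1 x t
  have F2 : pdx (fun x t => pdx p₀ x t - pdx (pdx p₁) x t)
      = fun x t => pdx (pdx p₀) x t - pdx (pdx (pdx p₁)) x t :=
    funext fun x => funext fun t => E2 x t
  simp only [E1] at hflow
  have HT0 : ∀ x t, pdt Γ x t = (p₁ x t) • pdx (pdx Γ) x t + ((p₀ x t) + ((-1 : ℝ) * (pdx (p₁) x t))) • pdx Γ x t + ((((-1 : ℝ) * (pdx (p₀) x t)) + (((-2 : ℝ)/3) * ((p₁ x t) * (p₁ x t)))) + (((2 : ℝ)/3) * (pdx (pdx (p₁)) x t))) • Γ x t := by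
    intro x t
    rw [hflow x t]
    module
  have HT1 : ∀ x t, pdt (pdx Γ) x t = (p₀ x t) • pdx (pdx Γ) x t + ((((1 : ℝ)/3) * ((p₁ x t) * (p₁ x t))) + (((-1 : ℝ)/3) * (pdx (pdx (p₁)) x t))) • pdx Γ x t + (((((p₀ x t) * (p₁ x t)) + ((-1 : ℝ) * (pdx (pdx (p₀)) x t))) + (((-4 : ℝ)/3) * ((p₁ x t) * (pdx (p₁) x t)))) + (((2 : ℝ)/3) * (pdx (pdx (pdx (p₁))) x t))) • Γ x t := by
    intro x t
    calc pdt (pdx Γ) x t = pdx (pdt (Γ)) x t := sΓ.comm x t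
      _ = (p₁ x t) • pdx (pdx (pdx Γ)) x t + (p₀ x t) • pdx (pdx Γ) x t + ((((-2 : ℝ)/3) * ((p₁ x t) * (p₁ x t))) + (((-1 : ℝ)/3) * (pdx (pdx (p₁)) x t))) • pdx Γ x t + ((((-1 : ℝ) * (pdx (pdx (p₀)) x t)) + (((-4 : ℝ)/3) * ((p₁ x t) * (pdx (p₁) x t)))) + (((2 : ℝ)/3) * (pdx (pdx (pdx (p₁))) x t))) • Γ x t := by
          rw [show pdt (Γ) = (fun x t => (p₁ x t) • pdx (pdx Γ) x t + ((p₀ x t) + ((-1 : ℝ) * (pdx (p₁) x t))) • pdx Γ x t + ((((-1 : ℝ) * (pdx (p₀) x t)) + (((-2 : ℝ)/3) * ((p₁ x t) * (p₁ x t)))) + (((2 : ℝ)/3) * (pdx (pdx (p₁)) x t))) • Γ x t)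
            from funext fun x => funext fun t => HT0 x t]
          exact (((((sp₁.hdx x t).smul (sΓ2.hdx x t)).add (((sp₀.hdx x t).add (HasDerivAt.const_mul (-1 : ℝ) (sp₁.px.hdx x t))).smul (sΓ1.hdx x t))).add ((((HasDerivAt.const_mul (-1 : ℝ) (sp₀.px.hdx x t)).add (HasDerivAt.const_mul ((-2 : ℝ)/3) ((sp₁.hdx x t).mul (sp₁.hdx x t)))).add (HasDerivAt.const_mul ((2 : ℝ)/3) (sp₁.px.px.hdx x t))).smul (sΓ.hdx x t))).congr_d (by simp only [Pi.add_apply, Pi.mul_apply]; module)).deriv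
      _ = (p₀ x t) • pdx (pdx Γ) x t + ((((1 : ℝ)/3) * ((p₁ x t) * (p₁ x t))) + (((-1 : ℝ)/3) * (pdx (pdx (p₁)) x t))) • pdx Γ x t + (((((p₀ x t) * (p₁ x t)) + ((-1 : ℝ) * (pdx (pdx (p₀)) x t))) + (((-4 : ℝ)/3) * ((p₁ x t) * (pdx (p₁) x t)))) + (((2 : ℝ)/3) * (pdx (pdx (pdx (p₁))) x t))) • Γ x t := by rw [hFv x t]; module
  have HT2 : ∀ x t, pdt (pdx (pdx Γ)) x t = (((pdx (p₀) x t) + (((1 : ℝ)/3) * ((p₁ x t) * (p₁ x t)))) + (((-1 : ℝ)/3) * (pdx (pdx (p₁)) x t))) • pdx (pdx Γ) x t + (((((2 : ℝ) * ((p₀ x t) * (p₁ x t))) + ((-1 : ℝ) * (pdx (pdx (p₀)) x t))) + (((-2 : ℝ)/3) * ((p₁ x t) * (pdx (p₁) x t)))) + (((1 : ℝ)/3) * (pdx (pdx (pdx (p₁))) x t))) • pdx Γ x t + ((((((((p₀ x t) * (p₀ x t)) + ((p₀ x t) * (pdx (p₁) x t))) + ((pdx (p₀) x t) * (p₁ x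 t))) + ((-1 : ℝ) * (pdx (pdx (pdx (p₀))) x t))) + (((-4 : ℝ)/3) * ((p₁ x t) * (pdx (pdx (p₁)) x t)))) + (((-4 : ℝ)/3) * ((pdx (p₁) x t) * (pdx (p₁) x t)))) + (((2 : ℝ)/3) * (pdx (pdx (pdx (pdx (p₁)))) x t))) • Γ x t := by
    intro x t
    calc pdt (pdx (pdx Γ)) x t = pdx (pdt (pdx Γ)) x t := sΓ1.comm x t
      _ = (p₀ x t) • pdx (pdx (pdx Γ)) x t + (((pdx (p₀) x t) + (((1 : ℝ)/3) * ((p₁ x t) * (p₁ x t)))) + (((-1 : ℝ)/3) * (pdx (pdx (p₁)) x t))) • pdx (pdx Γ) x t + (((((p₀ x t) * (p₁ x t)) + ((-1 : ℝ) * (pdx (pdx (p₀)) x t))) + (((-2 : ℝ)/3) * ((p₁ x t) * (pdx (p₁) x t)))) + (((1 : ℝ)/3) * (pdx (pdx (pdx (p₁))) x t))) • pdx Γ x t + (((((((p₀ x t) * (pdx (p₁) x t)) + ((pdx (p₀) x t) * (p₁ x t))) + ((-1 : ℝ) * (pdx (pdx (pdx (p₀))) x t))) + (((-4 : ℝ)/3)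 * ((p₁ x t) * (pdx (pdx (p₁)) x t)))) + (((-4 : ℝ)/3) * ((pdx (p₁) x t) * (pdx (p₁) x t)))) + (((2 : ℝ)/3) * (pdx (pdx (pdx (pdx (p₁)))) x t))) • Γ x t := by
          rw [show pdt (pdx Γ) = (fun x t => (p₀ x t) • pdx (pdx Γ) x t + ((((1 : ℝ)/3) * ((p₁ x t) * (p₁ x t))) + (((-1 : ℝ)/3) * (pdx (pdx (p₁)) x t))) • pdx Γ x t + (((((p₀ x t) * (p₁ x t)) + ((-1 : ℝ) * (pdx (pdx (p₀)) x t))) + (((-4 : ℝ)/3) * ((p₁ x t) * (pdx (p₁) x t)))) + (((2 : ℝ)/3) * (pdx (pdx (pdx (p₁))) x t))) • Γ x t)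
            from funext fun x => funext fun t => HT1 x t]
          exact (((((sp₀.hdx x t).smul (sΓ2.hdx x t)).add (((HasDerivAt.const_mul ((1 : ℝ)/3) ((sp₁.hdx x t).mul (sp₁.hdx x t))).add (HasDerivAt.const_mul ((-1 : ℝ)/3) (sp₁.px.px.hdx x t))).smul (sΓ1.hdx x t))).add ((((((sp₀.hdx x t).mul (sp₁.hdx x t)).add (HasDerivAt.const_mul (-1 : ℝ) (sp₀.px.px.hdx x t))).add (HasDerivAt.const_mul ((-4 : ℝ)/3) ((sp₁.hdx x t).mul (sp₁.px.hdx x t)))).add (HasDerivAt.const_mul ((2 : ℝ)/3) (sp₁.px.px.px.hdx x t))).smul (sΓ.hdx x t))).congr_d (by simp only [Pi.add_apply, Pi.mul_apply]; module)).deriv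
      _ = (((pdx (p₀) x t) + (((1 : ℝ)/3) * ((p₁ x t) * (p₁ x t)))) + (((-1 : ℝ)/3) * (pdx (pdx (p₁)) x t))) • pdx (pdx Γ) x t + (((((2 : ℝ) * ((p₀ x t) * (p₁ x t))) + ((-1 : ℝ) * (pdx (pdx (p₀)) x t))) + (((-2 : ℝ)/3) * ((p₁ x t) * (pdx (p₁) x t)))) + (((1 : ℝ)/3) * (pdx (pdx (pdx (p₁))) x t))) • pdx Γ x t + ((((((((p₀ x t) * (p₀ x t)) + ((p₀ x t) * (pdx (p₁) x t))) + ((pdx (p₀) x t) * (p₁ x t))) + ((-1 : ℝ) * (pdx (pdx (pdx (p₀))) x t))) + (((-4 : ℝ)/3) * ((p₁ x t) * (pdx (pdx (p₁)) x t)))) + (((-4 : ℝ)/3) * ((pdx (p₁) x t) * (pdx (p₁) x t)))) + (((2 : ℝ)/3) * (pdx (pdx (pdx (pdx (p₁)))) x t))) • Γ x t := by rw [hFv x t]; module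
  have HT3 : ∀ x t, pdt (pdx (pdx (pdx Γ))) x t = ((2 : ℝ) * ((p₀ x t) * (p₁ x t))) • pdx (pdx Γ) x t + (((((((((p₀ x t) * (p₀ x t)) + ((3 : ℝ) * ((p₀ x t) * (pdx (p₁) x t)))) + ((4 : ℝ) * ((pdx (p₀) x t) * (p₁ x t)))) + ((-2 : ℝ) * (pdx (pdx (pdx (p₀))) x t))) + (((1 : ℝ)/3) * ((p₁ x t) * ((p₁ x t) * (p₁ x t))))) + (((-7 : ℝ)/3) * ((p₁ x t) * (pdx (pdx (p₁)) x t)))) + ((-2 : ℝ) * ((pdx (p₁) x t) * (pdx (p₁) x t)))) + (pdx (pdx (pdx (pdx (p₁)))) x t)) • pdx Γ x t + ((((((((((3 : ℝ) * ((p₀ x t) * (pdx (p₀) x t))) + (((1 : ℝ)/3) * ((p₀ x t) * ((p₁ x t) * (p₁ x t))))) + (((2 : ℝ)/3) * ((p₀ x t) * (pdx (pdx (p₁)) x t)))) + ((2 : ℝ) * ((pdx (p₀) x t) * (pdx (p₁) x t)))) + ((pdx (pdx (p₀)) x t) * (p₁ x t))) + ((-1 : ℝ) * (pdx (pdx (pdx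 (pdx (p₀)))) x t))) + (((-4 : ℝ)/3) * ((p₁ x t) * (pdx (pdx (pdx (p₁))) x t)))) + ((-4 : ℝ) * ((pdx (p₁) x t) * (pdx (pdx (p₁)) x t)))) + (((2 : ℝ)/3) * (pdx (pdx (pdx (pdx (pdx (p₁))))) x t))) • Γ x t := by
    intro x t
    calc pdt (pdx (pdx (pdx Γ))) x t = pdx (pdt (pdx (pdx Γ))) x t := sΓ2.comm x t
      _ = (((pdx (p₀) x t) + (((1 : ℝ)/3) * ((p₁ x t) * (p₁ x t)))) + (((-1 : ℝ)/3) * (pdx (pdx (p₁)) x t))) • pdx (pdx (pdx Γ)) x t + ((2 : ℝ) * ((p₀ x t) * (p₁ x t))) • pdx (pdx Γ) x t + ((((((((p₀ x t) * (p₀ x t)) + ((3 : ℝ) * ((p₀ x t) * (pdx (p₁) x t)))) + ((3 : ℝ) * ((pdx (p₀) x t) * (p₁ x t)))) + ((-2 : ℝ) * (pdx (pdx (pdx (p₀))) x t))) + ((-2 : ℝ) * ((p₁ x t) * (pdx (pdx (p₁)) x t)))) + ((-2 : ℝ) * ((pdx (p₁) x t) * (pdx (p₁) x t)))) + (pdx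 (pdx (pdx (pdx (p₁)))) x t)) • pdx Γ x t + (((((((((2 : ℝ) * ((p₀ x t) * (pdx (p₀) x t))) + ((p₀ x t) * (pdx (pdx (p₁)) x t))) + ((2 : ℝ) * ((pdx (p₀) x t) * (pdx (p₁) x t)))) + ((pdx (pdx (p₀)) x t) * (p₁ x t))) + ((-1 : ℝ) * (pdx (pdx (pdx (pdx (p₀)))) x t))) + (((-4 : ℝ)/3) * ((p₁ x t) * (pdx (pdx (pdx (p₁))) x t)))) + ((-4 : ℝ) * ((pdx (p₁) x t) * (pdx (pdx (p₁)) x t)))) + (((2 : ℝ)/3) * (pdx (pdx (pdx (pdx (pdx (p₁))))) x t))) • Γ x t := by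
          rw [show pdt (pdx (pdx Γ)) = (fun x t => (((pdx (p₀) x t) + (((1 : ℝ)/3) * ((p₁ x t) * (p₁ x t)))) + (((-1 : ℝ)/3) * (pdx (pdx (p₁)) x t))) • pdx (pdx Γ) x t + (((((2 : ℝ) * ((p₀ x t) * (p₁ x t))) + ((-1 : ℝ) * (pdx (pdx (p₀)) x t))) + (((-2 : ℝ)/3) * ((p₁ x t) * (pdx (p₁) x t)))) + (((1 : ℝ)/3) * (pdx (pdx (pdx (p₁))) x t))) • pdx Γ x t + ((((((((p₀ x t) * (p₀ x t)) + ((p₀ x t) * (pdx (p₁) x t))) + ((pdx (p₀) x t) * (p₁ x t))) + ((-1 : ℝ) * (pdx (pdx (pdx (p₀))) x t))) + (((-4 : ℝ)/3) * ((p₁ x t) * (pdx (pdx (p₁)) x t)))) + (((-4 : ℝ)/3) * ((pdx (p₁) x t) * (pdx (p₁) x t)))) + (((2 : ℝ)/3) * (pdx (pdx (pdx (pdx (p₁)))) x t))) • Γ x t)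
            from funext fun x => funext fun t => HT2 x t]
          exact (((((((sp₀.px.hdx x t).add (HasDerivAt.const_mul ((1 : ℝ)/3) ((sp₁.hdx x t).mul (sp₁.hdx x t)))).add (HasDerivAt.const_mul ((-1 : ℝ)/3) (sp₁.px.px.hdx x t))).smul (sΓ2.hdx x t)).add (((((HasDerivAt.const_mul (2 : ℝ) ((sp₀.hdx x t).mul (sp₁.hdx x t))).add (HasDerivAt.const_mul (-1 : ℝ) (sp₀.px.px.hdx x t))).add (HasDerivAt.const_mul ((-2 : ℝ)/3) ((sp₁.hdx x t).mul (sp₁.px.hdx x t)))).add (HasDerivAt.const_mul ((1 : ℝ)/3) (sp₁.px.px.px.hdx x t))).smul (sΓ1.hdx x t))).add (((((((((sp₀.hdx x t).mul (sp₀.hdx x t)).add ((sp₀.hdx x t).mul (sp₁.px.hdx x t))).add ((sp₀.px.hdx x t).mul (sp₁.hdx x t))).add (HasDerivAt.const_mul (-1 : ℝ) (sp₀.px.px.px.hdx x t))).add (HasDerivAt.const_mul ((-4 : ℝ)/3) ((sp₁.hdx x t).mul (sp₁.px.px.hdx x t)))).add (HasDerivAt.const_mul ((-4 : ℝ)/3)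 ((sp₁.px.hdx x t).mul (sp₁.px.hdx x t)))).add (HasDerivAt.const_mul ((2 : ℝ)/3) (sp₁.px.px.px.px.hdx x t))).smul (sΓ.hdx x t))).congr_d (by simp only [Pi.add_apply, Pi.mul_apply]; module)).deriv
      _ = ((2 : ℝ) * ((p₀ x t) * (p₁ x t))) • pdx (pdx Γ) x t + (((((((((p₀ x t) * (p₀ x t)) + ((3 : ℝ) * ((p₀ x t) * (pdx (p₁) x t)))) + ((4 : ℝ) * ((pdx (p₀) x t) * (p₁ x t)))) + ((-2 : ℝ) * (pdx (pdx (pdx (p₀))) x t))) + (((1 : ℝ)/3) * ((p₁ x t) * ((p₁ x t) * (p₁ x t))))) + (((-7 : ℝ)/3) * ((p₁ x t) * (pdx (pdx (p₁)) x t)))) + ((-2 : ℝ) * ((pdx (p₁) x t) * (pdx (p₁) x t)))) + (pdx (pdx (pdx (pdx (p₁)))) x t)) • pdx Γ x t + ((((((((((3 : ℝ) * ((p₀ x t) * (pdx (p₀) x t))) + (((1 : ℝ)/3) * ((p₀ x t) * ((p₁ x t) * (p₁ x t))))) + (((2 : ℝ)/3) * ((p₀ x t) * (pdx (pdx (p₁))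 x t)))) + ((2 : ℝ) * ((pdx (p₀) x t) * (pdx (p₁) x t)))) + ((pdx (pdx (p₀)) x t) * (p₁ x t))) + ((-1 : ℝ) * (pdx (pdx (pdx (pdx (p₀)))) x t))) + (((-4 : ℝ)/3) * ((p₁ x t) * (pdx (pdx (pdx (p₁))) x t)))) + ((-4 : ℝ) * ((pdx (p₁) x t) * (pdx (pdx (p₁)) x t)))) + (((2 : ℝ)/3) * (pdx (pdx (pdx (pdx (pdx (p₁))))) x t))) • Γ x t := by rw [hFv x t]; module
  have Hq1t : ∀ x t, pdt p₁ x t = ((((((4 : ℝ) * ((p₀ x t) * (pdx (p₁) x t))) + ((4 : ℝ) * ((pdx (p₀) x t) * (p₁ x t)))) + ((-2 : ℝ) * (pdx (pdx (pdx (p₀))) x t))) + ((-2 : ℝ) * ((p₁ x t) * (pdx (pdx (p₁)) x t)))) + ((-2 : ℝ) * ((pdx (p₁) x t) * (pdx (p₁) x t)))) + (pdx (pdx (pdx (pdx (p₁)))) x t) := by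
    intro x t
    have hstep : pdt p₁ x t = det3 (pdt Γ x t) (pdx (pdx (pdx Γ)) x t) (pdx (pdx Γ) x t)
        + det3 (Γ x t) (pdt (pdx (pdx (pdx Γ))) x t) (pdx (pdx Γ) x t)
        + det3 (Γ x t) (pdx (pdx (pdx Γ)) x t) (pdt (pdx (pdx Γ)) x t) := by
      conv_lhs => rw [hp₁f]
      exact (hasDerivAt_det3 (u := fun t' => Γ x t') (v := fun t' => pdx (pdx (pdx Γ)) x t')
        (w := fun t' => pdx (pdx Γ) x t')
        (fun i => sΓ.hdtPi x t i) (fun i => sΓ3.hdtPi x t i) (fun i => sΓ2.hdtPi x t i)).deriv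
    rw [hstep, HT0 x t, HT3 x t, HT2 x t, hFv x t]
    have hdetE := harc x t
    rw [det3_eq] at hdetE
    simp only [det3_eq, Pi.add_apply, Pi.smul_apply, smul_eq_mul]
    linear_combination (((((((4 : ℝ) * ((p₀ x t) * (pdx (p₁) x t))) + ((4 : ℝ) * ((pdx (p₀) x t) * (p₁ x t)))) + ((-2 : ℝ) * (pdx (pdx (pdx (p₀))) x t))) + ((-2 : ℝ) * ((p₁ x t) * (pdx (pdx (p₁)) x t)))) + ((-2 : ℝ) * ((pdx (p₁) x t) * (pdx (p₁) x t)))) + (pdx (pdx (pdx (pdx (p₁)))) x t)) * hdetE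
  have Hq0t : ∀ x t, pdt p₀ x t = ((((((((4 : ℝ) * ((p₀ x t) * (pdx (p₀) x t))) + ((2 : ℝ) * ((pdx (p₀) x t) * (pdx (p₁) x t)))) + ((2 : ℝ) * ((pdx (pdx (p₀)) x t) * (p₁ x t)))) + ((-1 : ℝ) * (pdx (pdx (pdx (pdx (p₀)))) x t))) + (((4 : ℝ)/3) * ((p₁ x t) * ((p₁ x t) * (pdx (p₁) x t))))) + ((-2 : ℝ) * ((p₁ x t) * (pdx (pdx (pdx (p₁))) x t)))) + ((-4 : ℝ) * ((pdx (p₁) x t) * (pdx (pdx (p₁)) x t)))) + (((2 : ℝ)/3) * (pdx (pdx (pdx (pdx (pdx (p₁))))) x t)) := by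
    intro x t
    have hstep : pdt p₀ x t = det3 (pdt (pdx (pdx (pdx Γ))) x t) (pdx Γ x t) (pdx (pdx Γ) x t)
        + det3 (pdx (pdx (pdx Γ)) x t) (pdt (pdx Γ) x t) (pdx (pdx Γ) x t)
        + det3 (pdx (pdx (pdx Γ)) x t) (pdx Γ x t) (pdt (pdx (pdx Γ)) x t) := by
      conv_lhs => rw [hp₀f]
      exact (hasDerivAt_det3 (u := fun t' => pdx (pdx (pdx Γ)) x t') (v := fun t' => pdx Γ x t')
        (w := fun t' => pdx (pdx Γ) x t')
        (fun i => sΓ3.hdtPi x t i) (fun i => sΓ1.hdtPi x t i) (fun i => sΓ2.hdtPi x t i)).deriv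
    rw [hstep, HT3 x t, HT1 x t, HT2 x t, hFv x t]
    have hdetE := harc x t
    rw [det3_eq] at hdetE
    simp only [det3_eq, Pi.add_apply, Pi.smul_apply, smul_eq_mul]
    linear_combination (((((((((4 : ℝ) * ((p₀ x t) * (pdx (p₀) x t))) + ((2 : ℝ) * ((pdx (p₀) x t) * (pdx (p₁) x t)))) + ((2 : ℝ) * ((pdx (pdx (p₀)) x t) * (p₁ x t)))) + ((-1 : ℝ) * (pdx (pdx (pdx (pdx (p₀)))) x t))) + (((4 : ℝ)/3) * ((p₁ x t) * ((p₁ x t) * (pdx (p₁) x t))))) + ((-2 : ℝ) * ((p₁ x t) * (pdx (pdx (pdx (p₁))) x t)))) + ((-4 : ℝ) * ((pdx (p₁) x t) * (pdx (pdx (p₁)) x t)))) + (((2 : ℝ)/3) * (pdx (pdx (pdx (pdx (pdx (p₁))))) x t))) * hdetE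
  have Hp1tx : ∀ x t, pdt (pdx p₁) x t = (((((((4 : ℝ) * ((p₀ x t) * (pdx (pdx (p₁)) x t))) + ((8 : ℝ) * ((pdx (p₀) x t) * (pdx (p₁) x t)))) + ((4 : ℝ) * ((pdx (pdx (p₀)) x t) * (p₁ x t)))) + ((-2 : ℝ) * (pdx (pdx (pdx (pdx (p₀)))) x t))) + ((-2 : ℝ) * ((p₁ x t) * (pdx (pdx (pdx (p₁))) x t)))) + ((-6 : ℝ) * ((pdx (p₁) x t) * (pdx (pdx (p₁)) x t)))) + (pdx (pdx (pdx (pdx (pdx (p₁))))) x t) := by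
    intro x t
    rw [sp₁.comm x t, show pdt p₁ = (fun x t => ((((((4 : ℝ) * ((p₀ x t) * (pdx (p₁) x t))) + ((4 : ℝ) * ((pdx (p₀) x t) * (p₁ x t)))) + ((-2 : ℝ) * (pdx (pdx (pdx (p₀))) x t))) + ((-2 : ℝ) * ((p₁ x t) * (pdx (pdx (p₁)) x t)))) + ((-2 : ℝ) * ((pdx (p₁) x t) * (pdx (p₁) x t)))) + (pdx (pdx (pdx (pdx (p₁)))) x t))
      from funext fun x => funext fun t => Hq1t x t]
    exact ((((((((HasDerivAt.const_mul (4 : ℝ) ((sp₀.hdx x t).mul (sp₁.px.hdx x t))).add (HasDerivAt.const_mul (4 : ℝ) ((sp₀.px.hdx x t).mul (sp₁.hdx x t)))).add (HasDerivAt.const_mul (-2 : ℝ) (sp₀.px.px.px.hdx x t))).add (HasDerivAt.const_mul (-2 : ℝ) ((sp₁.hdx x t).mul (sp₁.px.px.hdx x t)))).add (HasDerivAt.const_mul (-2 : ℝ) ((sp₁.px.hdx x t).mul (sp₁.px.hdx x t)))).add (sp₁.px.px.px.px.hdx x t))).congr_d (by ring)).deriv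
  have HK2T : ∀ x t, pdt k₂ x t = ((((((((4 : ℝ) * ((p₀ x t) * (pdx (p₀) x t))) + ((-4 : ℝ) * ((p₀ x t) * (pdx (pdx (p₁)) x t)))) + ((-6 : ℝ) * ((pdx (p₀) x t) * (pdx (p₁) x t)))) + ((-2 : ℝ) * ((pdx (pdx (p₀)) x t) * (p₁ x t)))) + (pdx (pdx (pdx (pdx (p₀)))) x t)) + (((4 : ℝ)/3) * ((p₁ x t) * ((p₁ x t) * (pdx (p₁) x t))))) + ((2 : ℝ) * ((pdx (p₁) x t) * (pdx (pdx (p₁)) x t)))) + (((-1 : ℝ)/3) * (pdx (pdx (pdx (pdx (pdx (p₁))))) x t)) := by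
    intro x t
    rw [hk₂']
    calc pdt (fun x t => p₀ x t - pdx p₁ x t) x t = pdt p₀ x t - pdt (pdx p₁) x t :=
        ((sp₀.hdt x t).sub ((sp₁.px).hdt x t)).deriv
      _ = ((((((((4 : ℝ) * ((p₀ x t) * (pdx (p₀) x t))) + ((-4 : ℝ) * ((p₀ x t) * (pdx (pdx (p₁)) x t)))) + ((-6 : ℝ) * ((pdx (p₀) x t) * (pdx (p₁) x t)))) + ((-2 : ℝ) * ((pdx (pdx (p₀)) x t) * (p₁ x t)))) + (pdx (pdx (pdx (pdx (p₀)))) x t)) + (((4 : ℝ)/3) * ((p₁ x t) * ((p₁ x t) * (pdx (p₁) x t))))) + ((2 : ℝ) * ((pdx (p₁) x t) * (pdx (pdx (p₁)) x t)))) + (((-1 : ℝ)/3) * (pdx (pdx (pdx (pdx (pdx (p₁))))) x t)) := by rw [Hq0t x t, Hp1tx x t]; ring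
  have EOUT : ∀ x t, pdx (fun x t => (((((((2 : ℝ) * ((p₀ x t) * (p₀ x t))) + ((-4 : ℝ) * ((p₀ x t) * (pdx (p₁) x t)))) + ((-2 : ℝ) * ((pdx (p₀) x t) * (p₁ x t)))) + (pdx (pdx (pdx (p₀))) x t)) + (((4 : ℝ)/9) * ((p₁ x t) * ((p₁ x t) * (p₁ x t))))) + ((pdx (p₁) x t) * (pdx (p₁) x t))) + (((-1 : ℝ)/3) * (pdx (pdx (pdx (pdx (p₁)))) x t))) x t = ((((((((4 : ℝ) * ((p₀ x t) * (pdx (p₀) x t))) + ((-4 : ℝ) * ((p₀ x t) * (pdx (pdx (p₁)) x t)))) + ((-6 : ℝ) * ((pdx (p₀) x t) * (pdx (p₁) x t)))) + ((-2 : ℝ) * ((pdx (pdx (p₀)) x t) * (p₁ x t)))) + (pdx (pdx (pdx (pdx (p₀)))) x t)) + (((4 : ℝ)/3) * ((p₁ x t) * ((p₁ x t) * (pdx (p₁) x t))))) + ((2 : ℝ) * ((pdx (p₁) x t) * (pdx (pdx (p₁)) x t)))) + (((-1 : ℝ)/3) * (pdx (pdx (pdx (pdx (pdx (p₁))))) x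 t)) :=
    fun x t => (((((((((HasDerivAt.const_mul (2 : ℝ) ((sp₀.hdx x t).mul (sp₀.hdx x t))).add (HasDerivAt.const_mul (-4 : ℝ) ((sp₀.hdx x t).mul (sp₁.px.hdx x t)))).add (HasDerivAt.const_mul (-2 : ℝ) ((sp₀.px.hdx x t).mul (sp₁.hdx x t)))).add (sp₀.px.px.px.hdx x t)).add (HasDerivAt.const_mul ((4 : ℝ)/9) ((sp₁.hdx x t).mul ((sp₁.hdx x t).mul (sp₁.hdx x t))))).add ((sp₁.px.hdx x t).mul (sp₁.px.hdx x t))).add (HasDerivAt.const_mul ((-1 : ℝ)/3) (sp₁.px.px.px.px.hdx x t)))).congr_d (by simp only [Pi.add_apply, Pi.mul_apply]; ring)).deriv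
  have EPp : ∀ x t, pdx (fun x t => p₁ x t * (p₀ x t - pdx p₁ x t)) x t
      = pdx p₁ x t * (p₀ x t - pdx p₁ x t) + p₁ x t * (pdx p₀ x t - pdx (pdx p₁) x t) :=
    fun x t => ((sp₁.hdx x t).mul ((sp₀.hdx x t).sub ((sp₁.px).hdx x t))).deriv
  refine ⟨fun x t => ?_, fun x t => ?_, fun hper t s => ?_⟩
  · simp only [hk₁', hk₂', F1, F2, E3p, EPp]
    rw [Hq1t x t]
    ring
  · have hinfun : (fun x t => (2/3) * pdx (pdx (pdx (pdx k₁))) x t + pdx (pdx (pdx k₂)) x t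
            - 2 * k₁ x t * pdx (pdx k₁) x t - (pdx k₁ x t)^2
            - 2 * k₁ x t * pdx k₂ x t + (4/9) * (k₁ x t)^3 + 2 * (k₂ x t)^2)
        = (fun x t => (((((((2 : ℝ) * ((p₀ x t) * (p₀ x t))) + ((-4 : ℝ) * ((p₀ x t) * (pdx (p₁) x t)))) + ((-2 : ℝ) * ((pdx (p₀) x t) * (p₁ x t)))) + (pdx (pdx (pdx (p₀))) x t)) + (((4 : ℝ)/9) * ((p₁ x t) * ((p₁ x t) * (p₁ x t))))) + ((pdx (p₁) x t) * (pdx (p₁) x t))) + (((-1 : ℝ)/3) * (pdx (pdx (pdx (pdx (p₁)))) x t))) := by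
      funext a b
      simp only [hk₁', hk₂', F1, F2, E3p]
      ring
    calc pdt k₂ x t = ((((((((4 : ℝ) * ((p₀ x t) * (pdx (p₀) x t))) + ((-4 : ℝ) * ((p₀ x t) * (pdx (pdx (p₁)) x t)))) + ((-6 : ℝ) * ((pdx (p₀) x t) * (pdx (p₁) x t)))) + ((-2 : ℝ) * ((pdx (pdx (p₀)) x t) * (p₁ x t)))) + (pdx (pdx (pdx (pdx (p₀)))) x t)) + (((4 : ℝ)/3) * ((p₁ x t) * ((p₁ x t) * (pdx (p₁) x t))))) + ((2 : ℝ) * ((pdx (p₁) x t) * (pdx (pdx (p₁)) x t)))) + (((-1 : ℝ)/3) * (pdx (pdx (pdx (pdx (pdx (p₁))))) x t)) := HK2T x t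
      _ = pdx (fun x t => (((((((2 : ℝ) * ((p₀ x t) * (p₀ x t))) + ((-4 : ℝ) * ((p₀ x t) * (pdx (p₁) x t)))) + ((-2 : ℝ) * ((pdx (p₀) x t) * (p₁ x t)))) + (pdx (pdx (pdx (p₀))) x t)) + (((4 : ℝ)/9) * ((p₁ x t) * ((p₁ x t) * (p₁ x t))))) + ((pdx (p₁) x t) * (pdx (p₁) x t))) + (((-1 : ℝ)/3) * (pdx (pdx (pdx (pdx (p₁)))) x t))) x t := (EOUT x t).symm
      _ = _ := by rw [hinfun]
  · have perΓ1 := pdx_per hper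
    have perΓ2 := pdx_per perΓ1
    have perΓ3 := pdx_per perΓ2
    have perp₁ : ∀ x t, p₁ (x + 2 * Real.pi) t = p₁ x t := by
      intro x t
      rw [hp₁ (x + 2 * Real.pi) t, hp₁ x t, hper x t, perΓ3 x t, perΓ2 x t]
    have perp₀ : ∀ x t, p₀ (x + 2 * Real.pi) t = p₀ x t := by
      intro x t
      rw [hp₀ (x + 2 * Real.pi) t, hp₀ x t, perΓ3 x t, perΓ1 x t, perΓ2 x t]
    have perp₀d1 := pdx_per perp₀
    have perp₀d2 := pdx_per perp₀d1
    have perp₀d3 := pdx_per perp₀d2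
    have perp₁d1 := pdx_per perp₁
    have perp₁d2 := pdx_per perp₁d1
    have perp₁d3 := pdx_per perp₁d2
    have perp₁d4 := pdx_per perp₁d3
    have perW : ∀ x t, (fun x t => (((((((2 : ℝ) * ((p₀ x t) * (p₀ x t))) + ((-4 : ℝ) * ((p₀ x t) * (pdx (p₁) x t)))) + ((-2 : ℝ) * ((pdx (p₀) x t) * (p₁ x t)))) + (pdx (pdx (pdx (p₀))) x t)) + (((4 : ℝ)/9) * ((p₁ x t) * ((p₁ x t) * (p₁ x t))))) + ((pdx (p₁) x t) * (pdx (p₁) x t))) + (((-1 : ℝ)/3) * (pdx (pdx (pdx (pdx (p₁)))) x t))) (x + 2 * Real.pi) t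
        = (fun x t => (((((((2 : ℝ) * ((p₀ x t) * (p₀ x t))) + ((-4 : ℝ) * ((p₀ x t) * (pdx (p₁) x t)))) + ((-2 : ℝ) * ((pdx (p₀) x t) * (p₁ x t)))) + (pdx (pdx (pdx (p₀))) x t)) + (((4 : ℝ)/9) * ((p₁ x t) * ((p₁ x t) * (p₁ x t))))) + ((pdx (p₁) x t) * (pdx (p₁) x t))) + (((-1 : ℝ)/3) * (pdx (pdx (pdx (pdx (p₁)))) x t))) x t := by
      intro x t
      simp only []
      rw [perp₀ x t, perp₀d1 x t, perp₀d3 x t, perp₁ x t, perp₁d1 x t, perp₁d4 x t]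
    have sW : Sm (fun x t => (((((((2 : ℝ) * ((p₀ x t) * (p₀ x t))) + ((-4 : ℝ) * ((p₀ x t) * (pdx (p₁) x t)))) + ((-2 : ℝ) * ((pdx (p₀) x t) * (p₁ x t)))) + (pdx (pdx (pdx (p₀))) x t)) + (((4 : ℝ)/9) * ((p₁ x t) * ((p₁ x t) * (p₁ x t))))) + ((pdx (p₁) x t) * (pdx (p₁) x t))) + (((-1 : ℝ)/3) * (pdx (pdx (pdx (pdx (p₁)))) x t))) := (((((((Sm.cmul (2 : ℝ) (sp₀.mul sp₀)).add (Sm.cmul (-4 : ℝ) (sp₀.mul sp₁.px))).add (Sm.cmul (-2 : ℝ) (sp₀.px.mul sp₁))).add sp₀.px.px.px).add (Sm.cmul ((4 : ℝ)/9) (sp₁.mul (sp₁.mul sp₁)))).add (sp₁.px.mul sp₁.px)).add (Sm.cmul ((-1 : ℝ)/3) sp₁.px.px.px.px))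
    have sK2 : Sm (fun x t => p₀ x t - pdx p₁ x t) := sp₀.sub sp₁.px
    have pi2 : (0:ℝ) ≤ 2 * Real.pi := by positivity
    have key : ∀ τ : ℝ, HasDerivAt
        (fun τ' => ∫ x in (0:ℝ)..(2 * Real.pi), (p₀ x τ' - pdx p₁ x τ')) 0 τ := by
      intro τ
      have scont : Continuous fun p : ℝ × ℝ => pdt (fun x t => p₀ x t - pdx p₁ x t) p.1 p.2 :=
        (sK2.pt).continuous
      have hK : IsCompact ((Set.Icc (0:ℝ) (2 * Real.pi)) ×ˢ (Set.Icc (τ - 1) (τ + 1))) :=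
        isCompact_Icc.prod isCompact_Icc
      obtain ⟨C, hC⟩ := hK.exists_bound_of_continuousOn scont.continuousOn
      have main := intervalIntegral.hasDerivAt_integral_of_dominated_loc_of_deriv_le
        (F := fun τ' x => p₀ x τ' - pdx p₁ x τ')
        (F' := fun τ' x => pdt (fun x t => p₀ x t - pdx p₁ x t) x τ')
        (x₀ := τ) (s := Metric.ball τ 1) (bound := fun _ => C) (a := 0) (b := 2 * Real.pi)
        (μ := MeasureTheory.volume)
        (Metric.ball_mem_nhds τ one_pos)
        (Filter.Eventually.of_forall fun τ' =>
          ((sK2.contSliceX τ').aestronglyMeasurable))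
        ((sK2.contSliceX τ).continuousOn.intervalIntegrable)
        (((sK2.pt).contSliceX τ).aestronglyMeasurable)
        (Filter.Eventually.of_forall fun x hx => by
          intro τ' hτ'
          have hx' : x ∈ Set.Icc (0:ℝ) (2 * Real.pi) := by
            rw [Set.uIoc_of_le pi2] at hx
            exact Set.Ioc_subset_Icc_self hx
          have hτ'' : τ' ∈ Set.Icc (τ - 1) (τ + 1) := by
            rw [Real.ball_eq_Ioo] at hτ'
            exact Set.Ioo_subset_Icc_self hτ'
          exact hC (x, τ') ⟨hx', hτ''⟩)
        intervalIntegrable_const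
        (Filter.Eventually.of_forall fun x hx => fun τ' hτ' => sK2.hdt x τ')
      have hzero : (∫ x in (0:ℝ)..(2 * Real.pi),
          pdt (fun x t => p₀ x t - pdx p₁ x t) x τ) = 0 := by
        have h1 : (fun x => pdt (fun x t => p₀ x t - pdx p₁ x t) x τ)
            = fun x => pdx (fun x t => (((((((2 : ℝ) * ((p₀ x t) * (p₀ x t))) + ((-4 : ℝ) * ((p₀ x t) * (pdx (p₁) x t)))) + ((-2 : ℝ) * ((pdx (p₀) x t) * (p₁ x t)))) + (pdx (pdx (pdx (p₀))) x t)) + (((4 : ℝ)/9) * ((p₁ x t) * ((p₁ x t) * (p₁ x t))))) + ((pdx (p₁) x t) * (pdx (p₁) x t))) + (((-1 : ℝ)/3) * (pdx (pdx (pdx (pdx (p₁)))) x t))) x τ := by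
          funext y
          rw [← hk₂', HK2T y τ, ← EOUT y τ]
        rw [h1]
        rw [intervalIntegral.integral_eq_sub_of_hasDerivAt
          (f := fun x' => (((((((2 : ℝ) * ((p₀ x' τ) * (p₀ x' τ))) + ((-4 : ℝ) * ((p₀ x' τ) * (pdx (p₁) x' τ)))) + ((-2 : ℝ) * ((pdx (p₀) x' τ) * (p₁ x' τ)))) + (pdx (pdx (pdx (p₀))) x' τ)) + (((4 : ℝ)/9) * ((p₁ x' τ) * ((p₁ x' τ) * (p₁ x' τ))))) + ((pdx (p₁) x' τ) * (pdx (p₁) x' τ))) + (((-1 : ℝ)/3) * (pdx (pdx (pdx (pdx (p₁)))) x' τ)))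
          (fun y _ => sW.hdx y τ)
          (((sW.px).contSliceX τ).continuousOn.intervalIntegrable)]
        have hp' := perW 0 τ
        simp only [zero_add] at hp'
        rw [hp', sub_self]
      exact main.2.congr_d hzero
    have keyF := is_const_of_deriv_eq_zero (fun τ => (key τ).differentiableAt)
      (fun τ => (key τ).deriv) t s
    simpa only [hk₂'] using keyF
end Scal
end

section
/- Let k₁, k₂: ℝ × ℝ → ℝ be smooth functions satisfying (k₁)_t = k₁'' + 2k₂' and (k₂)_t = (2/3)(k₁k₁' − k₁''') − k₂''. Define, for each fixed t, the differential operators ℒf = f''' − (k₁f)' − k₂f and ℳ₁f = f'' − (2/3)k₁f acting on smooth functions f of x. Then the Lax equation ℒ_t = [ℳ₁, ℒ] holds, i.e. for every smooth f: ℝ → ℝ and every (x, t): −((k₁)_t f)' − (k₂)_t f = ℳ₁(ℒf) − ℒ(ℳ₁f). -/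
/-- The operator `ℒ = D³ − D∘k₁ − k₂`, i.e. `ℒf = f''' − (k₁f)' − k₂f`, at time `t`. -/
noncomputable def Lop (k₁ k₂ : ℝ → ℝ → ℝ) (t : ℝ) (f : ℝ → ℝ) : ℝ → ℝ :=
  fun x => deriv (deriv (deriv f)) x - deriv (fun x' => k₁ x' t * f x') x - k₂ x t * f x

/-- The operator `ℳ₁ = D² − (2/3)k₁`, at time `t`. -/
noncomputable def Mop1 (k₁ : ℝ → ℝ → ℝ) (t : ℝ) (f : ℝ → ℝ) : ℝ → ℝ :=
  fun x => deriv (deriv f) x - (2/3) * k₁ x t * f x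

lemma key (a b f : ℝ → ℝ) (ha : ContDiff ℝ (⊤ : ℕ∞) a) (hb : ContDiff ℝ (⊤ : ℕ∞) b)
    (hf : ContDiff ℝ (⊤ : ℕ∞) f) (x : ℝ) :
    -deriv (fun x' => (deriv (deriv a) x' + 2 * deriv b x') * f x') x
      - ((2/3) * (a x * deriv a x - deriv (deriv (deriv a)) x) - deriv (deriv b) x) * f x
    = Mop1 (fun y _ => a y) 0 (Lop (fun y _ => a y) (fun y _ => b y) 0 f) x
      - Lop (fun y _ => a y) (fun y _ => b y) 0 (Mop1 (fun y _ => a y) 0 f) x := by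
  have sd : ∀ g : ℝ → ℝ, ContDiff ℝ (⊤ : ℕ∞) g → ContDiff ℝ (⊤ : ℕ∞) (deriv g) :=
    fun g hg => (contDiff_infty_iff_deriv.mp hg).2
  have da : Differentiable ℝ a := ha.differentiable (by simp)
  have hA1 := sd a ha
  have da1 : Differentiable ℝ (deriv a) := hA1.differentiable (by simp)
  have hA2 := sd _ hA1
  have da2 : Differentiable ℝ (deriv (deriv a)) := hA2.differentiable (by simp)
  have da3 : Differentiable ℝ (deriv (deriv (deriv a))) := (sd _ hA2).differentiable (by simp)
  have db : Differentiable ℝ b := hb.differentiable (by simp)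
  have hB1 := sd b hb
  have db1 : Differentiable ℝ (deriv b) := hB1.differentiable (by simp)
  have db2 : Differentiable ℝ (deriv (deriv b)) := (sd _ hB1).differentiable (by simp)
  have df : Differentiable ℝ f := hf.differentiable (by simp)
  have hF1 := sd f hf
  have df1 : Differentiable ℝ (deriv f) := hF1.differentiable (by simp)
  have hF2 := sd _ hF1
  have df2 : Differentiable ℝ (deriv (deriv f)) := hF2.differentiable (by simp)
  have hF3 := sd _ hF2
  have df3 : Differentiable ℝ (deriv (deriv (deriv f))) := hF3.differentiable (by simp)
  have hF4 := sd _ hF3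
  have df4 : Differentiable ℝ (deriv (deriv (deriv (deriv f)))) := hF4.differentiable (by simp)
  have Eaf : deriv (fun y => a y * f y) = fun y => deriv a y * f y + a y * deriv f y := by
    funext y; simp (disch := fun_prop) only [deriv_fun_mul]
  have EL1 : deriv (fun y => deriv (deriv (deriv f)) y
        - (deriv a y * f y + a y * deriv f y) - b y * f y)
      = fun y => deriv (deriv (deriv (deriv f))) y
        - (deriv (deriv a) y * f y + 2 * (deriv a y * deriv f y) + a y * deriv (deriv f) y)
        - (deriv b y * f y + b y * deriv f y) := by
    funext y
    simp (disch := fun_prop) only [deriv_fun_sub, deriv_fun_add, deriv_fun_mul]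
    ring
  have EM1 : deriv (fun y => deriv (deriv f) y - 2 / 3 * a y * f y)
      = fun y => deriv (deriv (deriv f)) y
        - (2 / 3 * deriv a y * f y + 2 / 3 * a y * deriv f y) := by
    funext y
    simp (disch := fun_prop) only [deriv_fun_sub, deriv_fun_mul, deriv_const_mul, deriv_const']
    ring
  have EM2 : deriv (fun y => deriv (deriv (deriv f)) y
        - (2 / 3 * deriv a y * f y + 2 / 3 * a y * deriv f y))
      = fun y => deriv (deriv (deriv (deriv f))) y
        - (2 / 3 * deriv (deriv a) y * f y + 2 * (2 / 3 * deriv a y * deriv f y)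
            + 2 / 3 * a y * deriv (deriv f) y) := by
    funext y
    simp (disch := fun_prop) only [deriv_fun_sub, deriv_fun_add, deriv_fun_mul, deriv_const_mul, deriv_const']
    ring
  delta Lop Mop1
  simp only [Eaf, EL1, EM1, EM2]
  simp (disch := fun_prop) only [deriv_fun_sub, deriv_fun_add, deriv_fun_mul, deriv_const_mul, deriv_const']
  ring

/-- The Boussinesq curvature system `(k₁)_t = k₁'' + 2k₂'`,
`(k₂)_t = (2/3)(k₁k₁' − k₁''') − k₂''` implies the Lax equation `ℒ_t = [ℳ₁, ℒ]`:
for every smooth `f`, `−((k₁)_t f)' − (k₂)_t f = ℳ₁(ℒf) − ℒ(ℳ₁f)`. -/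
theorem lax_representation_first_flow
    (k₁ k₂ : ℝ → ℝ → ℝ)
    (hk₁ : ContDiff ℝ (⊤ : ℕ∞) (fun p : ℝ × ℝ => k₁ p.1 p.2))
    (hk₂ : ContDiff ℝ (⊤ : ℕ∞) (fun p : ℝ × ℝ => k₂ p.1 p.2))
    (hev₁ : ∀ x t, pdt k₁ x t = pdx (pdx k₁) x t + 2 * pdx k₂ x t)
    (hev₂ : ∀ x t, pdt k₂ x t
        = (2/3) * (k₁ x t * pdx k₁ x t - pdx (pdx (pdx k₁)) x t) - pdx (pdx k₂) x t) :
    ∀ f : ℝ → ℝ, ContDiff ℝ (⊤ : ℕ∞) f → ∀ x t : ℝ,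
      -deriv (fun x' => pdt k₁ x' t * f x') x - pdt k₂ x t * f x
        = Mop1 k₁ t (Lop k₁ k₂ t f) x - Lop k₁ k₂ t (Mop1 k₁ t f) x := by
  intro f hf x t
  have ha : ContDiff ℝ (⊤ : ℕ∞) (fun y => k₁ y t) :=
    (hk₁.of_le (by simp)).comp (contDiff_id.prodMk (contDiff_const (c := t)))
  have hb : ContDiff ℝ (⊤ : ℕ∞) (fun y => k₂ y t) :=
    (hk₂.of_le (by simp)).comp (contDiff_id.prodMk (contDiff_const (c := t)))
  have h1 : (fun x' => pdt k₁ x' t * f x')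
      = fun x' => (deriv (deriv (fun y => k₁ y t)) x'
          + 2 * deriv (fun y => k₂ y t) x') * f x' := by
    funext x'
    rw [hev₁ x' t]
    rfl
  rw [h1, hev₂ x t]
  exact key (fun y => k₁ y t) (fun y => k₂ y t) f ha hb (hf.of_le (by simp)) x
end

section
/- Let γ: ℝ → ℝ³ be smooth, 2π-periodic, and parametrized by centroaffine arclength with curvature k₁ = |γ, γ''', γ''|. Let X = a·γ + b·γ' + c·γ'' and Y = ã·γ + b̃·γ' + c̃·γ'' where a, b, c, ã, b̃, c̃ are smooth 2π-periodic functions satisfying the non-stretching conditions b' = −a − (1/3)(c'' + 2k₁c) and b̃' = −ã − (1/3)(c̃'' + 2k₁c̃). Then ∫₀^{2π} |X, γ', Y| dx = −∫₀^{2π} (b'c̃ + c'b̃) dx. -/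
lemma det3_expand (u v w : Fin 3 → ℝ) (a b c ta tb tc : ℝ) :
    det3 (a•u+b•v+c•w) v (ta•u+tb•v+tc•w) = (a*tc - ta*c) * det3 u v w := by
  simp [det3, Matrix.det_fin_three]
  ring

lemma deriv_per {f : ℝ → ℝ} (hf : ∀ x, f (x + 2 * Real.pi) = f x) :
    deriv f (2 * Real.pi) = deriv f 0 := by
  have h := deriv_comp_add_const f (2 * Real.pi) (x := 0)
  simp only [hf] at h
  rw [zero_add] at h
  exact h.symm

/-- For two non-stretching periodic vector fields `X = aγ + bγ' + cγ''` and
`Y = ãγ + b̃γ' + c̃γ''` along a closed starlike curve `γ`, the pre-symplectic pairing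
reduces to `∮ |X, γ', Y| dx = −∮ (b'c̃ + c'b̃) dx`. -/
theorem presymplectic_pairing_reduction
    (γ : ℝ → Fin 3 → ℝ) (hγ : ContDiff ℝ (⊤ : ℕ∞) γ)
    (hper : ∀ x, γ (x + 2 * Real.pi) = γ x)
    (harc : ∀ x, det3 (γ x) (deriv γ x) (deriv (deriv γ) x) = 1)
    (k₁ : ℝ → ℝ)
    (hk₁ : ∀ x, k₁ x = det3 (γ x) (deriv (deriv (deriv γ)) x) (deriv (deriv γ) x))
    (a b c ta tb tc : ℝ → ℝ)
    (ha : ContDiff ℝ (⊤ : ℕ∞) a) (hb : ContDiff ℝ (⊤ : ℕ∞) b) (hc : ContDiff ℝ (⊤ : ℕ∞) c)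
    (hta : ContDiff ℝ (⊤ : ℕ∞) ta) (htb : ContDiff ℝ (⊤ : ℕ∞) tb) (htc : ContDiff ℝ (⊤ : ℕ∞) tc)
    (hpa : ∀ x, a (x + 2 * Real.pi) = a x)
    (hpb : ∀ x, b (x + 2 * Real.pi) = b x)
    (hpc : ∀ x, c (x + 2 * Real.pi) = c x)
    (hpta : ∀ x, ta (x + 2 * Real.pi) = ta x)
    (hptb : ∀ x, tb (x + 2 * Real.pi) = tb x)
    (hptc : ∀ x, tc (x + 2 * Real.pi) = tc x)
    (hns : ∀ x, deriv b x = -a x - (1/3) * (deriv (deriv c) x + 2 * k₁ x * c x))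
    (htns : ∀ x, deriv tb x = -ta x - (1/3) * (deriv (deriv tc) x + 2 * k₁ x * tc x))
    (X Y : ℝ → Fin 3 → ℝ)
    (hX : ∀ x, X x = a x • γ x + b x • deriv γ x + c x • deriv (deriv γ) x)
    (hY : ∀ x, Y x = ta x • γ x + tb x • deriv γ x + tc x • deriv (deriv γ) x) :
    (∫ x in (0:ℝ)..(2 * Real.pi), det3 (X x) (deriv γ x) (Y x))
      = -∫ x in (0:ℝ)..(2 * Real.pi), (deriv b x * tc x + deriv c x * tb x) := by
  have hdet : ∀ x, det3 (X x) (deriv γ x) (Y x) = a x * tc x - ta x * c x := by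
    intro x
    rw [hX, hY, det3_expand, harc, mul_one]
  have hca := ha.continuous
  have hcc := hc.continuous
  have hcta := hta.continuous
  have hctb := htb.continuous
  have hctc := htc.continuous
  have hcD : ∀ {f : ℝ → ℝ}, ContDiff ℝ (⊤ : ℕ∞) f → ContDiff ℝ (⊤ : ℕ∞) (deriv f) := by
    intro f hf
    exact (contDiff_infty_iff_deriv.mp (hf.of_le (by simp))).2
  have hcb' : Continuous (deriv b) := (hcD hb).continuous
  have hcc' : Continuous (deriv c) := (hcD hc).continuous
  have hctc' : Continuous (deriv tc) := (hcD htc).continuous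
  set F : ℝ → ℝ := fun x => c x * tb x - (1/3) * (deriv c x * tc x - c x * deriv tc x) with hF
  have hder : ∀ x, HasDerivAt F
      (a x * tc x - ta x * c x + (deriv b x * tc x + deriv c x * tb x)) x := by
    intro x
    have h1 : (1:ℕ∞) ≤ (⊤ : ℕ∞) := le_top
    have hcd : HasDerivAt c (deriv c x) x := (hc.differentiable (by simp) x).hasDerivAt
    have htbd : HasDerivAt tb (deriv tb x) x := (htb.differentiable (by simp) x).hasDerivAt
    have htcd : HasDerivAt tc (deriv tc x) x := (htc.differentiable (by simp) x).hasDerivAt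
    have hcd2 : HasDerivAt (deriv c) (deriv (deriv c) x) x :=
      (((hcD hc).differentiable (by simp)) x).hasDerivAt
    have htcd2 : HasDerivAt (deriv tc) (deriv (deriv tc) x) x :=
      (((hcD htc).differentiable (by simp)) x).hasDerivAt
    have H := ((hcd.mul htbd).sub
      (((hcd2.mul htcd).sub (hcd.mul htcd2)).const_mul (1/3 : ℝ)))
    refine H.congr_deriv ?_
    rw [hns x, htns x]
    ring
  have key : (∫ x in (0:ℝ)..(2 * Real.pi),
      (a x * tc x - ta x * c x + (deriv b x * tc x + deriv c x * tb x)))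
      = F (2 * Real.pi) - F 0 := by
    apply intervalIntegral.integral_eq_sub_of_hasDerivAt (fun x _ => hder x)
    apply Continuous.intervalIntegrable
    exact ((hca.mul hctc).sub (hcta.mul hcc)).add ((hcb'.mul hctc).add (hcc'.mul hctb))
  have hFper : F (2 * Real.pi) = F 0 := by
    have h1 := hpc 0; have h2 := hptb 0; have h3 := hptc 0
    simp only [zero_add] at h1 h2 h3
    simp only [hF, h1, h2, h3, deriv_per hpc, deriv_per hptc]
  rw [hFper, sub_self] at key
  have hint1 : IntervalIntegrable (fun x => a x * tc x - ta x * c x)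
      MeasureTheory.volume 0 (2 * Real.pi) :=
    ((hca.mul hctc).sub (hcta.mul hcc)).intervalIntegrable _ _
  have hint2 : IntervalIntegrable (fun x => deriv b x * tc x + deriv c x * tb x)
      MeasureTheory.volume 0 (2 * Real.pi) :=
    ((hcb'.mul hctc).add (hcc'.mul hctb)).intervalIntegrable _ _
  rw [intervalIntegral.integral_add hint1 hint2] at key
  have heq : (∫ x in (0:ℝ)..(2 * Real.pi), det3 (X x) (deriv γ x) (Y x))
      = ∫ x in (0:ℝ)..(2 * Real.pi), (a x * tc x - ta x * c x) :=
    intervalIntegral.integral_congr (fun x _ => hdet x)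
  rw [heq]; linarith
end

section
/- Let X = (x₁, x₂): ℝ → ℝ² be a smooth curve with det(X(s), X'(s)) = 1 for all s. Then X'' = −p·X where p = det(X', X''), and the Veronese lift Γ := 2^{−1/3}(x₁², x₁x₂, x₂²): ℝ → ℝ³ satisfies |Γ, Γ', Γ''| = 1 for all s and Γ''' = −2p'·Γ − 4p·Γ'; that is, Γ is parametrized by centroaffine arclength with curvatures k₁ = −4p and k₂ = 2p'. -/
/-- `det2 u v` is the determinant of the 2×2 matrix with columns `u`, `v` in `ℝ²`. -/
noncomputable def det2 (u v : Fin 2 → ℝ) : ℝ := u 0 * v 1 - u 1 * v 0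

private theorem deriv_eq_of (f : ℝ → ℝ) {d d' x : ℝ} (h : HasDerivAt f d x) (he : d' = d) :
    HasDerivAt f d' x := he ▸ h

/-- For a plane curve `X` with `det(X, X') = 1`, one has `X'' = −pX` with
`p = det(X', X'')`, and the Veronese lift `Γ = 2^{−1/3}(x₁², x₁x₂, x₂²)` satisfies
`|Γ, Γ', Γ''| = 1` and `Γ''' = −2p'Γ − 4pΓ'`; that is, `Γ` is centroaffine
arclength-parametrized with curvatures `k₁ = −4p`, `k₂ = 2p'`. -/
theorem veronese_lift_of_plane_curve
    (X : ℝ → Fin 2 → ℝ) (hX : ContDiff ℝ (⊤ : ℕ∞) X)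
    (hdet : ∀ s, det2 (X s) (deriv X s) = 1)
    (p : ℝ → ℝ)
    (hp : ∀ s, p s = det2 (deriv X s) (deriv (deriv X) s))
    (Γ : ℝ → Fin 3 → ℝ)
    (hΓ : ∀ s, Γ s = ((2:ℝ) ^ (-(1/3) : ℝ)) •
        ![(X s 0)^2, X s 0 * X s 1, (X s 1)^2]) :
    (∀ s, deriv (deriv X) s = (-p s) • X s) ∧
    (∀ s, det3 (Γ s) (deriv Γ s) (deriv (deriv Γ) s) = 1) ∧
    (∀ s, deriv (deriv (deriv Γ)) s
        = (-2 * deriv p s) • Γ s + (-4 * p s) • deriv Γ s) := by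
  set c : ℝ := (2:ℝ) ^ (-(1/3) : ℝ) with hcdef
  have hc3 : c ^ 3 = 1/2 := by
    rw [hcdef, ← Real.rpow_natCast ((2:ℝ) ^ (-(1/3) : ℝ)) 3,
      ← Real.rpow_mul (by norm_num : (0:ℝ) ≤ 2)]
    norm_num
  set a : ℝ → ℝ := fun s => X s 0 with hadef
  set b : ℝ → ℝ := fun s => X s 1 with hbdef
  have hXinf : ContDiff ℝ (⊤ : ℕ∞) X := hX.of_le (by simp)
  have ha : ContDiff ℝ (⊤ : ℕ∞) a := contDiff_pi.mp hXinf 0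
  have hb : ContDiff ℝ (⊤ : ℕ∞) b := contDiff_pi.mp hXinf 1
  set a1 : ℝ → ℝ := deriv a with ha1def
  set b1 : ℝ → ℝ := deriv b with hb1def
  have ha1 : ContDiff ℝ (⊤ : ℕ∞) a1 := (contDiff_infty_iff_deriv.mp ha).2
  have hb1 : ContDiff ℝ (⊤ : ℕ∞) b1 := (contDiff_infty_iff_deriv.mp hb).2
  set a2 : ℝ → ℝ := deriv a1 with ha2def
  set b2 : ℝ → ℝ := deriv b1 with hb2def
  have ha2 : ContDiff ℝ (⊤ : ℕ∞) a2 := (contDiff_infty_iff_deriv.mp ha1).2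
  have hb2 : ContDiff ℝ (⊤ : ℕ∞) b2 := (contDiff_infty_iff_deriv.mp hb1).2
  set a3 : ℝ → ℝ := deriv a2 with ha3def
  set b3 : ℝ → ℝ := deriv b2 with hb3def
  have hle : ((⊤ : ℕ∞) : WithTop ℕ∞) ≠ 0 := by simp
  have haD : ∀ s, HasDerivAt a (a1 s) s := fun s => ((ha.differentiable hle) s).hasDerivAt
  have hbD : ∀ s, HasDerivAt b (b1 s) s := fun s => ((hb.differentiable hle) s).hasDerivAt
  have ha1D : ∀ s, HasDerivAt a1 (a2 s) s := fun s => ((ha1.differentiable hle) s).hasDerivAt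
  have hb1D : ∀ s, HasDerivAt b1 (b2 s) s := fun s => ((hb1.differentiable hle) s).hasDerivAt
  have ha2D : ∀ s, HasDerivAt a2 (a3 s) s := fun s => ((ha2.differentiable hle) s).hasDerivAt
  have hb2D : ∀ s, HasDerivAt b2 (b3 s) s := fun s => ((hb2.differentiable hle) s).hasDerivAt
  -- derivative of X, componentwise
  have hXd : ∀ s, HasDerivAt X (deriv X s) s :=
    fun s => ((hXinf.differentiable hle) s).hasDerivAt
  have hX1 : ∀ s, deriv X s = ![a1 s, b1 s] := by
    intro s
    funext i
    have h := hasDerivAt_pi.mp (hXd s) i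
    fin_cases i
    · simpa using h.unique (haD s)
    · simpa using h.unique (hbD s)
  have hX1' : deriv X = fun s => ![a1 s, b1 s] := funext hX1
  have hX2 : ∀ s, deriv (deriv X) s = ![a2 s, b2 s] := by
    intro s
    rw [hX1']
    have h : HasDerivAt (fun s => (![a1 s, b1 s] : Fin 2 → ℝ)) ![a2 s, b2 s] s := by
      apply hasDerivAt_pi.mpr
      intro i
      fin_cases i
      · simpa using ha1D s
      · simpa using hb1D s
    exact h.deriv
  have hdet1 : ∀ s, a s * b1 s - b s * a1 s = 1 := by
    intro s
    simpa [det2, hX1 s, hadef, hbdef] using hdet s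
  have hp1 : ∀ s, p s = a1 s * b2 s - b1 s * a2 s := by
    intro s
    simpa [det2, hX1 s, hX2 s] using hp s
  have horth : ∀ s, a s * b2 s - b s * a2 s = 0 := by
    intro s
    have hF : HasDerivAt (fun t => a t * b1 t - b t * a1 t)
        (a1 s * b1 s + a s * b2 s - (b1 s * a1 s + b s * a2 s)) s :=
      ((haD s).mul (hb1D s)).sub ((hbD s).mul (ha1D s))
    have hF0 : HasDerivAt (fun t => a t * b1 t - b t * a1 t) 0 s := by
      have e : (fun t => a t * b1 t - b t * a1 t) = fun _ => (1:ℝ) := funext hdet1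
      rw [e]; exact hasDerivAt_const s 1
    have h := hF.unique hF0
    linear_combination h
  have hA2 : ∀ s, a2 s = -(p s) * a s := by
    intro s
    linear_combination (-(a2 s)) * hdet1 s + (a s) * hp1 s + (a1 s) * horth s
  have hB2 : ∀ s, b2 s = -(p s) * b s := by
    intro s
    linear_combination (-(b2 s)) * hdet1 s + (b s) * hp1 s + (b1 s) * horth s
  have part1 : ∀ s, deriv (deriv X) s = (-p s) • X s := by
    intro s
    rw [hX2 s]
    funext i
    fin_cases i
    · simpa [hadef] using hA2 s
    · simpa [hbdef] using hB2 s
  -- derivative of p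
  have hpD : ∀ s, HasDerivAt p
      (a2 s * b2 s + a1 s * b3 s - (b2 s * a2 s + b1 s * a3 s)) s := by
    intro s
    have e : p = fun t => a1 t * b2 t - b1 t * a2 t := funext hp1
    rw [e]
    exact ((ha1D s).mul (hb2D s)).sub ((hb1D s).mul (ha2D s))
  have hpD' : ∀ s, HasDerivAt p (deriv p s) s := fun s => (hpD s).differentiableAt.hasDerivAt
  have hA3 : ∀ s, a3 s = -(deriv p s * a s + p s * a1 s) := by
    intro s
    have e : a2 = fun t => -(p t * a t) := by
      funext t; rw [hA2 t]; ring
    have h : HasDerivAt (fun t => -(p t * a t))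
        (-(deriv p s * a s + p s * a1 s)) s := ((hpD' s).mul (haD s)).neg
    rw [ha3def, e]
    exact h.deriv
  have hB3 : ∀ s, b3 s = -(deriv p s * b s + p s * b1 s) := by
    intro s
    have e : b2 = fun t => -(p t * b t) := by
      funext t; rw [hB2 t]; ring
    have h : HasDerivAt (fun t => -(p t * b t))
        (-(deriv p s * b s + p s * b1 s)) s := ((hpD' s).mul (hbD s)).neg
    rw [hb3def, e]
    exact h.deriv
  -- the lift and its derivatives
  set G : ℝ → Fin 3 → ℝ := fun s => ![c * (a s)^2, c * (a s * b s), c * (b s)^2] with hGdef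
  set G1 : ℝ → Fin 3 → ℝ := fun s =>
    ![c * (2 * a s * a1 s), c * (a1 s * b s + a s * b1 s), c * (2 * b s * b1 s)] with hG1def
  set G2 : ℝ → Fin 3 → ℝ := fun s =>
    ![c * (2 * (a1 s)^2 + 2 * a s * a2 s),
      c * (a2 s * b s + 2 * (a1 s * b1 s) + a s * b2 s),
      c * (2 * (b1 s)^2 + 2 * b s * b2 s)] with hG2def
  set G3 : ℝ → Fin 3 → ℝ := fun s =>
    ![c * (6 * (a1 s * a2 s) + 2 * (a s * a3 s)),
      c * (a3 s * b s + 3 * (a2 s * b1 s) + 3 * (a1 s * b2 s) + a s * b3 s),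
      c * (6 * (b1 s * b2 s) + 2 * (b s * b3 s))] with hG3def
  have hΓG : Γ = G := by
    funext s
    rw [hΓ s, hGdef]
    funext i
    fin_cases i <;> simp [hadef, hbdef, smul_eq_mul]
  have hGD : ∀ s, HasDerivAt G (G1 s) s := by
    intro s
    rw [hGdef, hG1def]
    apply hasDerivAt_pi.mpr
    intro i
    fin_cases i <;>
      simp only [Fin.zero_eta, Fin.mk_one, Fin.reduceFinMk, Matrix.cons_val_zero,
        Matrix.cons_val_one, Matrix.head_cons, Matrix.cons_val_two, Matrix.tail_cons]
    · exact deriv_eq_of _ (((haD s).pow 2).const_mul c) (by push_cast; ring)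
    · exact deriv_eq_of _ ((((haD s).mul (hbD s))).const_mul c) (by ring)
    · exact deriv_eq_of _ (((hbD s).pow 2).const_mul c) (by push_cast; ring)
  have hG1D : ∀ s, HasDerivAt G1 (G2 s) s := by
    intro s
    rw [hG1def, hG2def]
    apply hasDerivAt_pi.mpr
    intro i
    fin_cases i <;>
      simp only [Fin.zero_eta, Fin.mk_one, Fin.reduceFinMk, Matrix.cons_val_zero,
        Matrix.cons_val_one, Matrix.head_cons, Matrix.cons_val_two, Matrix.tail_cons]
    · exact deriv_eq_of _ ((((haD s).const_mul 2).mul (ha1D s)).const_mul c) (by ring)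
    · exact deriv_eq_of _
        ((((ha1D s).mul (hbD s)).add ((haD s).mul (hb1D s))).const_mul c) (by ring)
    · exact deriv_eq_of _ ((((hbD s).const_mul 2).mul (hb1D s)).const_mul c) (by ring)
  have hG2D : ∀ s, HasDerivAt G2 (G3 s) s := by
    intro s
    rw [hG2def, hG3def]
    apply hasDerivAt_pi.mpr
    intro i
    fin_cases i <;>
      simp only [Fin.zero_eta, Fin.mk_one, Fin.reduceFinMk, Matrix.cons_val_zero,
        Matrix.cons_val_one, Matrix.head_cons, Matrix.cons_val_two, Matrix.tail_cons]
    · exact deriv_eq_of _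
        ((((ha1D s).pow 2).const_mul 2).add (((haD s).const_mul 2).mul (ha2D s)) |>.const_mul c)
        (by push_cast; ring)
    · exact deriv_eq_of _
        (((((ha2D s).mul (hbD s)).add (((ha1D s).mul (hb1D s)).const_mul 2)).add
          ((haD s).mul (hb2D s))).const_mul c) (by ring)
    · exact deriv_eq_of _
        ((((hb1D s).pow 2).const_mul 2).add (((hbD s).const_mul 2).mul (hb2D s)) |>.const_mul c)
        (by push_cast; ring)
  have hΓ1 : deriv Γ = G1 := by
    funext s; rw [hΓG]; exact (hGD s).deriv
  have hΓ2 : deriv (deriv Γ) = G2 := by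
    funext s; rw [hΓ1]; exact (hG1D s).deriv
  have hΓ3 : deriv (deriv (deriv Γ)) = G3 := by
    funext s; rw [hΓ2]; exact (hG2D s).deriv
  refine ⟨part1, ?_, ?_⟩
  · intro s
    rw [hΓ2, hΓ1, hΓG, hGdef, hG1def, hG2def]
    simp only [det3, Matrix.det_fin_three, Matrix.of_apply, Matrix.cons_val',
      Matrix.cons_val_zero, Matrix.cons_val_one, Matrix.head_cons, Matrix.cons_val_two,
      Matrix.tail_cons, Matrix.empty_val', Matrix.cons_val_fin_one, Matrix.head_fin_const]
    rw [hA2 s, hB2 s]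
    linear_combination (2 * (a s * b1 s - b s * a1 s)^3) * hc3 +
      (((a s * b1 s - b s * a1 s)^2 + (a s * b1 s - b s * a1 s) + 1)) * hdet1 s
  · intro s
    rw [hΓ3, hΓ1, hΓG, hGdef, hG1def, hG3def]
    funext i
    fin_cases i <;>
      simp only [Fin.zero_eta, Fin.mk_one, Fin.reduceFinMk, Matrix.cons_val_zero,
        Matrix.cons_val_one, Matrix.head_cons, Matrix.cons_val_two, Matrix.tail_cons,
        Pi.add_apply, Pi.smul_apply, smul_eq_mul] <;>
      simp only [hA2 s, hB2 s, hA3 s, hB3 s] <;> ring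
end

section
/- Let X = (x₁, x₂): ℝ × ℝ → ℝ² be a smooth family of plane curves and r: ℝ × ℝ → ℝ a smooth function such that X_t = r·X' − (1/2)r'·X. Then the Veronese lift Γ := 2^{−1/3}(x₁², x₁x₂, x₂²) satisfies Γ_t = r·Γ' − r'·Γ. -/
private lemma deriv_comp_apply {n : ℕ} (f : ℝ → Fin n → ℝ) {t : ℝ}
    (hf : DifferentiableAt ℝ f t) (i : Fin n) :
    deriv (fun s => f s i) t = deriv f t i := by
  have h := ((ContinuousLinearMap.proj i : (Fin n → ℝ) →L[ℝ] ℝ)).hasFDerivAt.comp_hasDerivAt t hf.hasDerivAt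
  simpa [Function.comp_def] using h.deriv

/-- If a family of plane curves evolves by the non-stretching flow
`X_t = rX' − (1/2)r'X`, then its Veronese lift `Γ = 2^{−1/3}(x₁², x₁x₂, x₂²)`
evolves by `Γ_t = rΓ' − r'Γ`. -/
theorem veronese_lift_evolution
    (X : ℝ → ℝ → Fin 2 → ℝ)
    (hX : ContDiff ℝ (⊤ : ℕ∞) (fun p : ℝ × ℝ => X p.1 p.2))
    (r : ℝ → ℝ → ℝ)
    (hr : ContDiff ℝ (⊤ : ℕ∞) (fun p : ℝ × ℝ => r p.1 p.2))
    (hflow : ∀ x t, pdt X x t = r x t • pdx X x t - ((1/2) * pdx r x t) • X x t)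
    (Γ : ℝ → ℝ → Fin 3 → ℝ)
    (hΓ : ∀ x t, Γ x t = ((2:ℝ) ^ (-(1/3) : ℝ)) •
        ![(X x t 0)^2, X x t 0 * X x t 1, (X x t 1)^2]) :
    ∀ x t, pdt Γ x t = r x t • pdx Γ x t - pdx r x t • Γ x t := by
  intro x t
  set c : ℝ := (2:ℝ) ^ (-(1/3) : ℝ) with hc
  have hXx : ContDiff ℝ (⊤ : ℕ∞) (fun x' => X x' t) := hX.comp ((contDiff_id (𝕜 := ℝ)).prodMk contDiff_const)
  have hXt : ContDiff ℝ (⊤ : ℕ∞) (fun t' => X x t') := hX.comp ((contDiff_const (𝕜 := ℝ)).prodMk contDiff_id)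
  have hDXx : DifferentiableAt ℝ (fun x' => X x' t) x := (hXx.differentiable (by simp)) x
  have hDXt : DifferentiableAt ℝ (fun t' => X x t') t := (hXt.differentiable (by simp)) t
  have hDx : ∀ i, DifferentiableAt ℝ (fun x' => X x' t i) x := fun i => (differentiableAt_pi.mp hDXx) i
  have hDt : ∀ i, DifferentiableAt ℝ (fun t' => X x t' i) t := fun i => (differentiableAt_pi.mp hDXt) i
  have flow : ∀ i, deriv (fun t' => X x t' i) t
      = r x t * deriv (fun x' => X x' t i) x
        - (1/2 * deriv (fun x' => r x' t) x) * X x t i := by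
    intro i
    have h := congrFun (hflow x t) i
    simp only [pdt, pdx, Pi.sub_apply, Pi.smul_apply, smul_eq_mul] at h
    rw [← deriv_comp_apply _ hDXt i, ← deriv_comp_apply _ hDXx i] at h
    exact h
  have Ht0 : HasDerivAt (fun t' => X x t' 0) (deriv (fun t' => X x t' 0) t) t := (hDt 0).hasDerivAt
  have Ht1 : HasDerivAt (fun t' => X x t' 1) (deriv (fun t' => X x t' 1) t) t := (hDt 1).hasDerivAt
  have Hx0 : HasDerivAt (fun x' => X x' t 0) (deriv (fun x' => X x' t 0) x) x := (hDx 0).hasDerivAt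
  have Hx1 : HasDerivAt (fun x' => X x' t 1) (deriv (fun x' => X x' t 1) x) x := (hDx 1).hasDerivAt
  -- component functions of Γ slices
  have et0 : (fun t' => Γ x t' (0:Fin 3)) = fun t' => c * (X x t' 0 * X x t' 0) := by
    funext t'; rw [hΓ]; simp [pow_two]
  have et1 : (fun t' => Γ x t' (1:Fin 3)) = fun t' => c * (X x t' 0 * X x t' 1) := by
    funext t'; rw [hΓ]; simp
  have et2 : (fun t' => Γ x t' (2:Fin 3)) = fun t' => c * (X x t' 1 * X x t' 1) := by
    funext t'; rw [hΓ]; simp [pow_two]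
  have ex0 : (fun x' => Γ x' t (0:Fin 3)) = fun x' => c * (X x' t 0 * X x' t 0) := by
    funext x'; rw [hΓ]; simp [pow_two]
  have ex1 : (fun x' => Γ x' t (1:Fin 3)) = fun x' => c * (X x' t 0 * X x' t 1) := by
    funext x'; rw [hΓ]; simp
  have ex2 : (fun x' => Γ x' t (2:Fin 3)) = fun x' => c * (X x' t 1 * X x' t 1) := by
    funext x'; rw [hΓ]; simp [pow_two]
  have v0 : Γ x t (0:Fin 3) = c * (X x t 0 * X x t 0) := congrFun et0 t
  have v1 : Γ x t (1:Fin 3) = c * (X x t 0 * X x t 1) := congrFun et1 t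
  have v2 : Γ x t (2:Fin 3) = c * (X x t 1 * X x t 1) := congrFun et2 t
  -- differentiability of Γ slices
  have hDΓt : DifferentiableAt ℝ (fun t' => Γ x t') t := by
    rw [differentiableAt_pi]
    intro i
    fin_cases i
    · rw [show (fun t' => Γ x t' (⟨0, by omega⟩ : Fin 3)) = _ from et0]; fun_prop
    · rw [show (fun t' => Γ x t' (⟨1, by omega⟩ : Fin 3)) = _ from et1]; fun_prop
    · rw [show (fun t' => Γ x t' (⟨2, by omega⟩ : Fin 3)) = _ from et2]; fun_prop
  have hDΓx : DifferentiableAt ℝ (fun x' => Γ x' t) x := by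
    rw [differentiableAt_pi]
    intro i
    fin_cases i
    · rw [show (fun x' => Γ x' t (⟨0, by omega⟩ : Fin 3)) = _ from ex0]; fun_prop
    · rw [show (fun x' => Γ x' t (⟨1, by omega⟩ : Fin 3)) = _ from ex1]; fun_prop
    · rw [show (fun x' => Γ x' t (⟨2, by omega⟩ : Fin 3)) = _ from ex2]; fun_prop
  have prodD : ∀ (f g : ℝ → ℝ) (s f' g' : ℝ), HasDerivAt f f' s → HasDerivAt g g' s →
      deriv (fun u => c * (f u * g u)) s = c * (f' * g s + f s * g') := by
    intro f g s f' g' hf hg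
    exact ((hf.mul hg).const_mul c).deriv
  have main0 : deriv (fun t' => Γ x t' (0:Fin 3)) t
      = r x t * deriv (fun x' => Γ x' t (0:Fin 3)) x - deriv (fun x' => r x' t) x * Γ x t 0 := by
    rw [et0, ex0, v0, prodD _ _ _ _ _ Ht0 Ht0, prodD _ _ _ _ _ Hx0 Hx0, flow 0]; ring
  have main1 : deriv (fun t' => Γ x t' (1:Fin 3)) t
      = r x t * deriv (fun x' => Γ x' t (1:Fin 3)) x - deriv (fun x' => r x' t) x * Γ x t 1 := by
    rw [et1, ex1, v1, prodD _ _ _ _ _ Ht0 Ht1, prodD _ _ _ _ _ Hx0 Hx1, flow 0, flow 1]; ring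
  have main2 : deriv (fun t' => Γ x t' (2:Fin 3)) t
      = r x t * deriv (fun x' => Γ x' t (2:Fin 3)) x - deriv (fun x' => r x' t) x * Γ x t 2 := by
    rw [et2, ex2, v2, prodD _ _ _ _ _ Ht1 Ht1, prodD _ _ _ _ _ Hx1 Hx1, flow 1]; ring
  funext i
  simp only [pdt, pdx, Pi.sub_apply, Pi.smul_apply, smul_eq_mul]
  rw [← deriv_comp_apply _ hDΓt i, ← deriv_comp_apply _ hDΓx i]
  fin_cases i
  · exact main0
  · exact main1
  · exact main2
end

section
/- Let Γ: ℝ × ℝ → ℝ³ be a smooth family such that for each t the curve Γ(·, t) is parametrized by centroaffine arclength, and suppose Γ satisfies the flow Γ_t = r₀Γ + r₁Γ' + r₂Γ'' with r₂ = k₁' + 2k₂, r₁ = (1/3)k₁² − (2/3)k₁'' − k₂', and r₀ = −r₁' − (1/3)(r₂'' + 2k₁r₂). Suppose that at time t₀ the conicity condition k₂ = −(1/2)k₁' holds identically in x. Then at t₀: (i) ∂/∂t (k₂ + (1/2)k₁') = 0 identically in x, so the flow preserves conicity; and (ii) u := k₁ satisfies u_t = (1/3)(u''''' − 5u·u'''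 − (25/2)u'·u'' + 5u²·u'), i.e. a rescaled Kaup–Kuperschmidt equation. -/
open scoped ContDiff


namespace KKaux

lemma det3_eq (u v w : Fin 3 → ℝ) :
    det3 u v w = u 0 * (v 1 * w 2 - v 2 * w 1) - u 1 * (v 0 * w 2 - v 2 * w 0)
      + u 2 * (v 0 * w 1 - v 1 * w 0) := by
  simp [det3, Matrix.det_fin_three]; ring

lemma cramer_vec (v u w z : Fin 3 → ℝ) (i : Fin 3) :
    v i * det3 u w z = det3 v w z * u i + det3 u v z * w i + det3 u w v * z i := by
  fin_cases i <;> · simp only [det3_eq, Fin.isValue, show (⟨0, by omega⟩ : Fin 3) = 0 from rfl,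
      show (⟨1, by omega⟩ : Fin 3) = 1 from rfl, show (⟨2, by omega⟩ : Fin 3) = 2 from rfl]; ring

lemma det3_dup12 (v w : Fin 3 → ℝ) : det3 v v w = 0 := by simp only [det3_eq]; ring
lemma det3_dup23 (u v : Fin 3 → ℝ) : det3 u v v = 0 := by simp only [det3_eq]; ring

lemma det3_combo {u v w X Y Z : Fin 3 → ℝ} (h1 : det3 u v w = 1)
    {a₀ a₁ a₂ b₀ b₁ b₂ c₀ c₁ c₂ : ℝ}
    (hX : X = a₀ • u + a₁ • v + a₂ • w) (hY : Y = b₀ • u + b₁ • v + b₂ • w)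
    (hZ : Z = c₀ • u + c₁ • v + c₂ • w) :
    det3 X Y Z = a₀ * (b₁ * c₂ - b₂ * c₁) - a₁ * (b₀ * c₂ - b₂ * c₀)
      + a₂ * (b₀ * c₁ - b₁ * c₀) := by
  subst hX hY hZ
  simp only [det3_eq, Pi.add_apply, Pi.smul_apply, smul_eq_mul] at h1 ⊢
  linear_combination (a₀ * (b₁ * c₂ - b₂ * c₁) - a₁ * (b₀ * c₂ - b₂ * c₀)
      + a₂ * (b₀ * c₁ - b₁ * c₀)) * h1

lemma hasDerivAt_det3 {A B C : ℝ → Fin 3 → ℝ} {A' B' C' : Fin 3 → ℝ} {x : ℝ}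
    (hA : HasDerivAt A A' x) (hB : HasDerivAt B B' x) (hC : HasDerivAt C C' x) :
    HasDerivAt (fun y => det3 (A y) (B y) (C y))
      (det3 A' (B x) (C x) + det3 (A x) B' (C x) + det3 (A x) (B x) C') x := by
  have hA' := hasDerivAt_pi.mp hA
  have hB' := hasDerivAt_pi.mp hB
  have hC' := hasDerivAt_pi.mp hC
  simp only [det3_eq]
  have H := ((((hA' 0).mul (((hB' 1).mul (hC' 2)).sub ((hB' 2).mul (hC' 1)))).sub
      ((hA' 1).mul (((hB' 0).mul (hC' 2)).sub ((hB' 2).mul (hC' 0))))).add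
      ((hA' 2).mul (((hB' 0).mul (hC' 1)).sub ((hB' 1).mul (hC' 0)))))
  refine H.congr_deriv ?_
  simp only [Pi.mul_apply, Pi.sub_apply]
  ring

end KKaux

namespace KKaux

variable {E : Type*} [NormedAddCommGroup E] [NormedSpace ℝ E]

lemma slice_x {f : ℝ → ℝ → E} (hf : ContDiff ℝ ∞ (fun p : ℝ × ℝ => f p.1 p.2)) (t : ℝ) :
    ContDiff ℝ ∞ (fun x => f x t) := hf.comp (contDiff_id.prodMk contDiff_const)

lemma slice_t {f : ℝ → ℝ → E} (hf : ContDiff ℝ ∞ (fun p : ℝ × ℝ => f p.1 p.2)) (x : ℝ) :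
    ContDiff ℝ ∞ (fun t => f x t) := hf.comp (contDiff_const.prodMk contDiff_id)

lemma pdx_eq {f : ℝ → ℝ → E} (hf : ContDiff ℝ ∞ (fun p : ℝ × ℝ => f p.1 p.2)) (x t : ℝ) :
    pdx f x t = fderiv ℝ (fun p : ℝ × ℝ => f p.1 p.2) (x, t) (1, 0) := by
  have hF : HasFDerivAt (fun p : ℝ × ℝ => f p.1 p.2)
      (fderiv ℝ (fun p : ℝ × ℝ => f p.1 p.2) (x, t)) (x, t) :=
    (hf.differentiable (by norm_num) (x, t)).hasFDerivAt
  have hL : HasDerivAt (fun x' : ℝ => ((x', t) : ℝ × ℝ)) (1, 0) x :=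
    (hasDerivAt_id x).prodMk (hasDerivAt_const x t)
  exact (hF.comp_hasDerivAt x hL).deriv

lemma pdt_eq {f : ℝ → ℝ → E} (hf : ContDiff ℝ ∞ (fun p : ℝ × ℝ => f p.1 p.2)) (x t : ℝ) :
    pdt f x t = fderiv ℝ (fun p : ℝ × ℝ => f p.1 p.2) (x, t) (0, 1) := by
  have hF : HasFDerivAt (fun p : ℝ × ℝ => f p.1 p.2)
      (fderiv ℝ (fun p : ℝ × ℝ => f p.1 p.2) (x, t)) (x, t) :=
    (hf.differentiable (by norm_num) (x, t)).hasFDerivAt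
  have hL : HasDerivAt (fun t' : ℝ => ((x, t') : ℝ × ℝ)) (0, 1) t :=
    (hasDerivAt_const t x).prodMk (hasDerivAt_id t)
  exact (hF.comp_hasDerivAt t hL).deriv

lemma contDiff_pdx {f : ℝ → ℝ → E} (hf : ContDiff ℝ ∞ (fun p : ℝ × ℝ => f p.1 p.2)) :
    ContDiff ℝ ∞ (fun p : ℝ × ℝ => pdx f p.1 p.2) := by
  have : (fun p : ℝ × ℝ => pdx f p.1 p.2)
      = fun p : ℝ × ℝ => fderiv ℝ (fun q : ℝ × ℝ => f q.1 q.2) p (1, 0) := by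
    funext p; exact pdx_eq hf p.1 p.2
  rw [this]
  exact (hf.fderiv_right (m := ∞) (le_of_eq rfl)).clm_apply contDiff_const

lemma contDiff_pdt {f : ℝ → ℝ → E} (hf : ContDiff ℝ ∞ (fun p : ℝ × ℝ => f p.1 p.2)) :
    ContDiff ℝ ∞ (fun p : ℝ × ℝ => pdt f p.1 p.2) := by
  have : (fun p : ℝ × ℝ => pdt f p.1 p.2)
      = fun p : ℝ × ℝ => fderiv ℝ (fun q : ℝ × ℝ => f q.1 q.2) p (0, 1) := by
    funext p; exact pdt_eq hf p.1 p.2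
  rw [this]
  exact (hf.fderiv_right (m := ∞) (le_of_eq rfl)).clm_apply contDiff_const

lemma schwarz {f : ℝ → ℝ → E} (hf : ContDiff ℝ ∞ (fun p : ℝ × ℝ => f p.1 p.2)) (x t : ℝ) :
    pdt (pdx f) x t = pdx (pdt f) x t := by
  set F : ℝ × ℝ → E := fun p => f p.1 p.2 with hFdef
  have hd : ∀ p, HasFDerivAt F (fderiv ℝ F p) p :=
    fun p => (hf.differentiable (by norm_num) p).hasFDerivAt
  have h2 : HasFDerivAt (fderiv ℝ F) (fderiv ℝ (fderiv ℝ F) (x, t)) (x, t) :=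
    (((hf.fderiv_right (m := ∞) (le_of_eq rfl)).differentiable (by norm_num)) (x, t)).hasFDerivAt
  have hsymm := second_derivative_symmetric hd h2 ((1 : ℝ), (0 : ℝ)) ((0 : ℝ), (1 : ℝ))
  have e1 : pdt (pdx f) x t = fderiv ℝ (fderiv ℝ F) (x, t) (0, 1) (1, 0) := by
    have hfun : (fun t' => pdx f x t') = fun t' => fderiv ℝ F (x, t') (1, 0) := by
      funext t'; exact pdx_eq hf x t'
    show deriv (fun t' => pdx f x t') t = _
    rw [hfun]
    have hL : HasDerivAt (fun t' : ℝ => ((x, t') : ℝ × ℝ)) (0, 1) t :=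
      (hasDerivAt_const t x).prodMk (hasDerivAt_id t)
    have hcomp : HasDerivAt (fun t' => fderiv ℝ F (x, t'))
        (fderiv ℝ (fderiv ℝ F) (x, t) (0, 1)) t := h2.comp_hasDerivAt t hL
    have happ := (ContinuousLinearMap.apply ℝ E ((1 : ℝ), (0 : ℝ))).hasFDerivAt.comp_hasDerivAt
      t hcomp
    exact happ.deriv
  have e2 : pdx (pdt f) x t = fderiv ℝ (fderiv ℝ F) (x, t) (1, 0) (0, 1) := by
    have hfun : (fun x' => pdt f x' t) = fun x' => fderiv ℝ F (x', t) (0, 1) := by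
      funext x'; exact pdt_eq hf x' t
    show deriv (fun x' => pdt f x' t) x = _
    rw [hfun]
    have hL : HasDerivAt (fun x' : ℝ => ((x', t) : ℝ × ℝ)) (1, 0) x :=
      (hasDerivAt_id x).prodMk (hasDerivAt_const x t)
    have hcomp : HasDerivAt (fun x' => fderiv ℝ F (x', t))
        (fderiv ℝ (fderiv ℝ F) (x, t) (1, 0)) x := h2.comp_hasDerivAt x hL
    have happ := (ContinuousLinearMap.apply ℝ E ((0 : ℝ), (1 : ℝ))).hasFDerivAt.comp_hasDerivAt
      x hcomp
    exact happ.deriv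
  rw [e1, e2, hsymm]

lemma pdx_slice {f : ℝ → ℝ → E} {t₀ : ℝ} {e g : ℝ → E}
    (h : ∀ x, f x t₀ = e x) (he : ∀ x, HasDerivAt e (g x) x) (x : ℝ) :
    pdx f x t₀ = g x := by
  have hfun : (fun x' => f x' t₀) = e := funext h
  show deriv (fun x' => f x' t₀) x = g x
  rw [hfun]; exact (he x).deriv

lemma congr_d {f : ℝ → E} {x : ℝ} {d d' : E} (h : HasDerivAt f d x) (hd : d' = d) :
    HasDerivAt f d' x := hd ▸ h

lemma contDiff_det3 {A B C : ℝ → ℝ → Fin 3 → ℝ}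
    (hA : ContDiff ℝ ∞ (fun p : ℝ × ℝ => A p.1 p.2))
    (hB : ContDiff ℝ ∞ (fun p : ℝ × ℝ => B p.1 p.2))
    (hC : ContDiff ℝ ∞ (fun p : ℝ × ℝ => C p.1 p.2)) :
    ContDiff ℝ ∞ (fun p : ℝ × ℝ => det3 (A p.1 p.2) (B p.1 p.2) (C p.1 p.2)) := by
  have hA' := fun i => (contDiff_pi.mp hA) i
  have hB' := fun i => (contDiff_pi.mp hB) i
  have hC' := fun i => (contDiff_pi.mp hC) i
  simp only [det3_eq]
  exact (((hA' 0).mul (((hB' 1).mul (hC' 2)).sub ((hB' 2).mul (hC' 1)))).sub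
      ((hA' 1).mul (((hB' 0).mul (hC' 2)).sub ((hB' 2).mul (hC' 0))))).add
      ((hA' 2).mul (((hB' 0).mul (hC' 1)).sub ((hB' 1).mul (hC' 0))))

end KKaux

open KKaux

/-- The third flow `Γ_t = r₀Γ + r₁Γ' + r₂Γ''` with `r₂ = k₁' + 2k₂`,
`r₁ = (1/3)k₁² − (2/3)k₁'' − k₂'`, `r₀ = −r₁' − (1/3)(r₂'' + 2k₁r₂)` preserves the
conicity condition `k₂ + (1/2)k₁' = 0`, and on conical curves the curvature `u = k₁`
satisfies the (rescaled) Kaup–Kuperschmidt equation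
`u_t = (1/3)(u''''' − 5uu''' − (25/2)u'u'' + 5u²u')`. -/
theorem conicity_preserving_flow_kaup_kuperschmidt
    (Γ : ℝ → ℝ → Fin 3 → ℝ)
    (hΓ : ContDiff ℝ (⊤ : ℕ∞) (fun p : ℝ × ℝ => Γ p.1 p.2))
    (harc : ∀ x t, det3 (Γ x t) (pdx Γ x t) (pdx (pdx Γ) x t) = 1)
    (p₀ p₁ k₁ k₂ : ℝ → ℝ → ℝ)
    (hp₀ : ∀ x t, p₀ x t = det3 (pdx (pdx (pdx Γ)) x t) (pdx Γ x t) (pdx (pdx Γ) x t))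
    (hp₁ : ∀ x t, p₁ x t = det3 (Γ x t) (pdx (pdx (pdx Γ)) x t) (pdx (pdx Γ) x t))
    (hk₁ : ∀ x t, k₁ x t = p₁ x t)
    (hk₂ : ∀ x t, k₂ x t = p₀ x t - pdx p₁ x t)
    (r₀ r₁ r₂ : ℝ → ℝ → ℝ)
    (hr₂ : ∀ x t, r₂ x t = pdx k₁ x t + 2 * k₂ x t)
    (hr₁ : ∀ x t, r₁ x t = (1/3) * (k₁ x t)^2 - (2/3) * pdx (pdx k₁) x t - pdx k₂ x t)
    (hr₀ : ∀ x t, r₀ x t = -pdx r₁ x t - (1/3) * (pdx (pdx r₂) x t + 2 * k₁ x t * r₂ x t))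
    (hflow : ∀ x t, pdt Γ x t
        = r₀ x t • Γ x t + r₁ x t • pdx Γ x t + r₂ x t • pdx (pdx Γ) x t)
    (t₀ : ℝ)
    (hconic : ∀ x, k₂ x t₀ = -(1/2) * pdx k₁ x t₀) :
    (∀ x, deriv (fun t => k₂ x t + (1/2) * pdx k₁ x t) t₀ = 0) ∧
    (∀ x, pdt k₁ x t₀
        = (1/3) * (pdx (pdx (pdx (pdx (pdx k₁)))) x t₀
            - 5 * k₁ x t₀ * pdx (pdx (pdx k₁)) x t₀
            - (25/2) * pdx k₁ x t₀ * pdx (pdx k₁) x t₀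
            + 5 * (k₁ x t₀)^2 * pdx k₁ x t₀)) := by
  have hk₁f : k₁ = p₁ := funext fun x => funext fun t => hk₁ x t
  subst hk₁f
  have hΓ' : ContDiff ℝ ∞ (fun p : ℝ × ℝ => Γ p.1 p.2) := hΓ.of_le (by simp)
  set Γ1 : ℝ → ℝ → Fin 3 → ℝ := pdx Γ with hΓ1def
  set Γ2 : ℝ → ℝ → Fin 3 → ℝ := pdx Γ1 with hΓ2def
  set Γ3 : ℝ → ℝ → Fin 3 → ℝ := pdx Γ2 with hΓ3def
  have hΓ1s : ContDiff ℝ ∞ (fun p : ℝ × ℝ => Γ1 p.1 p.2) := by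
    rw [hΓ1def]; exact contDiff_pdx hΓ'
  have hΓ2s : ContDiff ℝ ∞ (fun p : ℝ × ℝ => Γ2 p.1 p.2) := by
    rw [hΓ2def]; exact contDiff_pdx hΓ1s
  have hΓ3s : ContDiff ℝ ∞ (fun p : ℝ × ℝ => Γ3 p.1 p.2) := by
    rw [hΓ3def]; exact contDiff_pdx hΓ2s
  have hk₁s : ContDiff ℝ ∞ (fun p : ℝ × ℝ => k₁ p.1 p.2) := by
    have hfun : (fun p : ℝ × ℝ => k₁ p.1 p.2)
        = fun p : ℝ × ℝ => det3 (Γ p.1 p.2) (Γ3 p.1 p.2) (Γ2 p.1 p.2) :=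
      funext fun p => hp₁ p.1 p.2
    rw [hfun]; exact contDiff_det3 hΓ' hΓ3s hΓ2s
  have hp₀s : ContDiff ℝ ∞ (fun p : ℝ × ℝ => p₀ p.1 p.2) := by
    have hfun : (fun p : ℝ × ℝ => p₀ p.1 p.2)
        = fun p : ℝ × ℝ => det3 (Γ3 p.1 p.2) (Γ1 p.1 p.2) (Γ2 p.1 p.2) :=
      funext fun p => hp₀ p.1 p.2
    rw [hfun]; exact contDiff_det3 hΓ3s hΓ1s hΓ2s
  -- one-variable curvature functions at time t₀
  set u0 : ℝ → ℝ := fun x => k₁ x t₀ with hu0def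
  set u1 : ℝ → ℝ := deriv u0 with hu1def
  set u2 : ℝ → ℝ := deriv u1 with hu2def
  set u3 : ℝ → ℝ := deriv u2 with hu3def
  set u4 : ℝ → ℝ := deriv u3 with hu4def
  set u5 : ℝ → ℝ := deriv u4 with hu5def
  set u6 : ℝ → ℝ := deriv u5 with hu6def
  have hu0s : ContDiff ℝ ∞ u0 := by rw [hu0def]; exact slice_x hk₁s t₀
  have hu1s : ContDiff ℝ ∞ u1 := by rw [hu1def]; exact (contDiff_infty_iff_deriv.mp hu0s).2
  have hu2s : ContDiff ℝ ∞ u2 := by rw [hu2def]; exact (contDiff_infty_iff_deriv.mp hu1s).2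
  have hu3s : ContDiff ℝ ∞ u3 := by rw [hu3def]; exact (contDiff_infty_iff_deriv.mp hu2s).2
  have hu4s : ContDiff ℝ ∞ u4 := by rw [hu4def]; exact (contDiff_infty_iff_deriv.mp hu3s).2
  have hu5s : ContDiff ℝ ∞ u5 := by rw [hu5def]; exact (contDiff_infty_iff_deriv.mp hu4s).2
  have hD0 : ∀ y, HasDerivAt u0 (u1 y) y := by
    intro y; rw [hu1def]; exact (hu0s.differentiable (by norm_num) y).hasDerivAt
  have hD1 : ∀ y, HasDerivAt u1 (u2 y) y := by
    intro y; rw [hu2def]; exact (hu1s.differentiable (by norm_num) y).hasDerivAt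
  have hD2 : ∀ y, HasDerivAt u2 (u3 y) y := by
    intro y; rw [hu3def]; exact (hu2s.differentiable (by norm_num) y).hasDerivAt
  have hD3 : ∀ y, HasDerivAt u3 (u4 y) y := by
    intro y; rw [hu4def]; exact (hu3s.differentiable (by norm_num) y).hasDerivAt
  have hD4 : ∀ y, HasDerivAt u4 (u5 y) y := by
    intro y; rw [hu5def]; exact (hu4s.differentiable (by norm_num) y).hasDerivAt
  have hD5 : ∀ y, HasDerivAt u5 (u6 y) y := by
    intro y; rw [hu6def]; exact (hu5s.differentiable (by norm_num) y).hasDerivAt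
  -- identification of x-derivatives of k₁ at t₀ with the uᵢ
  have a0 : ∀ y, k₁ y t₀ = u0 y := by intro y; rw [hu0def]
  have a1 : ∀ y, pdx k₁ y t₀ = u1 y := by intro y; rw [hu1def, hu0def]; rfl
  have a2 : ∀ y, pdx (pdx k₁) y t₀ = u2 y := by
    intro y; rw [hu2def, hu1def, hu0def]; rfl
  have a3 : ∀ y, pdx (pdx (pdx k₁)) y t₀ = u3 y := by
    intro y; rw [hu3def, hu2def, hu1def, hu0def]; rfl
  have a5 : ∀ y, pdx (pdx (pdx (pdx (pdx k₁)))) y t₀ = u5 y := by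
    intro y; rw [hu5def, hu4def, hu3def, hu2def, hu1def, hu0def]; rfl
  -- conicity consequences at t₀
  have hk₂slice : ∀ y, k₂ y t₀ = -(1/2) * u1 y := by
    intro y; rw [hconic y, a1 y]
  have A4 : ∀ y, pdx k₂ y t₀ = -(1/2) * u2 y :=
    fun y => pdx_slice hk₂slice (fun z => HasDerivAt.const_mul (-(1/2)) (hD1 z)) y
  have F2 : ∀ y, p₀ y t₀ = 1/2 * u1 y := by
    intro y
    have h1 := hk₂ y t₀
    rw [hconic y, a1 y] at h1
    linarith [h1]
  have A5 : ∀ y, r₂ y t₀ = 0 := by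
    intro y; rw [hr₂ y t₀, a1 y, hk₂slice y]; ring
  have A6 : ∀ y, pdx r₂ y t₀ = 0 :=
    fun y => pdx_slice (e := fun _ => (0:ℝ)) (g := fun _ => (0:ℝ)) A5
      (fun z => hasDerivAt_const z 0) y
  have A7 : ∀ y, pdx (pdx r₂) y t₀ = 0 :=
    fun y => pdx_slice (e := fun _ => (0:ℝ)) (g := fun _ => (0:ℝ)) A6
      (fun z => hasDerivAt_const z 0) y
  -- explicit polynomial expressions for r₁ and its x-derivatives at t₀
  set R1 : ℝ → ℝ := fun y => 1/3 * (u0 y)^2 - 1/6 * u2 y with hR1def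
  set R1p : ℝ → ℝ := fun y => 2/3 * (u0 y * u1 y) - 1/6 * u3 y with hR1pdef
  set R1pp : ℝ → ℝ := fun y => 2/3 * (u1 y * u1 y + u0 y * u2 y) - 1/6 * u4 y with hR1ppdef
  set R1ppp : ℝ → ℝ := fun y => 2/3 * (3*(u1 y * u2 y) + u0 y * u3 y) - 1/6 * u5 y
    with hR1pppdef
  set R1pppp : ℝ → ℝ :=
    fun y => 2/3 * (3*(u2 y * u2 y) + 4*(u1 y * u3 y) + u0 y * u4 y) - 1/6 * u6 y
    with hR1ppppdef
  have hdR1 : ∀ y, HasDerivAt R1 (R1p y) y := by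
    intro y
    rw [hR1def, hR1pdef]
    exact congr_d ((((hD0 y).pow 2).const_mul (1/3)).sub
      (HasDerivAt.const_mul (1/6) (hD2 y))) (by ring)
  have hdR1p : ∀ y, HasDerivAt R1p (R1pp y) y := by
    intro y
    rw [hR1pdef, hR1ppdef]
    exact congr_d ((((hD0 y).mul (hD1 y)).const_mul (2/3)).sub
      (HasDerivAt.const_mul (1/6) (hD3 y))) (by ring)
  have hdR1pp : ∀ y, HasDerivAt R1pp (R1ppp y) y := by
    intro y
    rw [hR1ppdef, hR1pppdef]
    exact congr_d (((((hD1 y).mul (hD1 y)).add ((hD0 y).mul (hD2 y))).const_mul (2/3)).sub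
      (HasDerivAt.const_mul (1/6) (hD4 y))) (by ring)
  have hdR1ppp : ∀ y, HasDerivAt R1ppp (R1pppp y) y := by
    intro y
    rw [hR1pppdef, hR1ppppdef]
    exact congr_d ((((HasDerivAt.const_mul 3 ((hD1 y).mul (hD2 y))).add
      ((hD0 y).mul (hD3 y))).const_mul (2/3)).sub
      (HasDerivAt.const_mul (1/6) (hD5 y))) (by ring)
  -- slice values of r₁, r₀ at t₀
  have A9 : ∀ y, r₁ y t₀ = R1 y := by
    intro y; rw [hr₁ y t₀, a0 y, a2 y, A4 y, hR1def]; ring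
  have A10 : ∀ y, pdx r₁ y t₀ = R1p y := fun y => pdx_slice A9 hdR1 y
  have hr₀slice : ∀ y, r₀ y t₀ = -R1p y := by
    intro y; rw [hr₀ y t₀, A10 y, A7 y, A5 y]; ring
  -- spatial/temporal derivatives of the frame
  have hGd0 : ∀ y t, HasDerivAt (fun x' => Γ x' t) (Γ1 y t) y := by
    intro y t
    rw [hΓ1def]
    exact ((slice_x hΓ' t).differentiable (by norm_num) y).hasDerivAt
  have hGd1 : ∀ y t, HasDerivAt (fun x' => Γ1 x' t) (Γ2 y t) y := by
    intro y t
    rw [hΓ2def]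
    exact ((slice_x hΓ1s t).differentiable (by norm_num) y).hasDerivAt
  have hGd2 : ∀ y t, HasDerivAt (fun x' => Γ2 x' t) (Γ3 y t) y := by
    intro y t
    rw [hΓ3def]
    exact ((slice_x hΓ2s t).differentiable (by norm_num) y).hasDerivAt
  have hGt0 : ∀ y t, HasDerivAt (fun t' => Γ y t') (pdt Γ y t) t :=
    fun y t => ((slice_t hΓ' y).differentiable (by norm_num) t).hasDerivAt
  have hGt1 : ∀ y t, HasDerivAt (fun t' => Γ1 y t') (pdt Γ1 y t) t :=
    fun y t => ((slice_t hΓ1s y).differentiable (by norm_num) t).hasDerivAt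
  have hGt2 : ∀ y t, HasDerivAt (fun t' => Γ2 y t') (pdt Γ2 y t) t :=
    fun y t => ((slice_t hΓ2s y).differentiable (by norm_num) t).hasDerivAt
  have hGt3 : ∀ y t, HasDerivAt (fun t' => Γ3 y t') (pdt Γ3 y t) t :=
    fun y t => ((slice_t hΓ3s y).differentiable (by norm_num) t).hasDerivAt
  -- the determinant of (Γ, Γ_x, Γ_xxx) vanishes
  have hdet013 : ∀ y t, det3 (Γ y t) (Γ1 y t) (Γ3 y t) = 0 := by
    intro y t
    have hder : HasDerivAt (fun x' => det3 (Γ x' t) (Γ1 x' t) (Γ2 x' t))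
        (det3 (Γ1 y t) (Γ1 y t) (Γ2 y t) + det3 (Γ y t) (Γ2 y t) (Γ2 y t)
          + det3 (Γ y t) (Γ1 y t) (Γ3 y t)) y :=
      hasDerivAt_det3 (hGd0 y t) (hGd1 y t) (hGd2 y t)
    have hD := hder.deriv
    have hconstfun : (fun x' => det3 (Γ x' t) (Γ1 x' t) (Γ2 x' t)) = fun _ => (1:ℝ) :=
      funext fun z => harc z t
    rw [hconstfun, deriv_const, det3_dup12, det3_dup23] at hD
    linarith [hD]
  -- the Wilczynski frame relation at t₀
  have hframe : ∀ y, Γ3 y t₀ = (1/2 * u1 y) • Γ y t₀ + u0 y • Γ1 y t₀ := by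
    intro y
    funext i
    have hc := cramer_vec (Γ3 y t₀) (Γ y t₀) (Γ1 y t₀) (Γ2 y t₀) i
    rw [harc y t₀, ← hp₀ y t₀, ← hp₁ y t₀, hdet013 y t₀, F2 y, a0 y] at hc
    simp only [Pi.add_apply, Pi.smul_apply, smul_eq_mul]
    linarith [hc]
  -- evolution of the frame at t₀
  have W1 : ∀ y, pdt Γ y t₀ = (-R1p y) • Γ y t₀ + R1 y • Γ1 y t₀ := by
    intro y
    rw [hflow y t₀, hr₀slice y, A9 y, A5 y, zero_smul, add_zero]
  have W2 : ∀ y, pdt Γ1 y t₀ = (-R1pp y) • Γ y t₀ + R1 y • Γ2 y t₀ := by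
    intro y
    conv_lhs => rw [hΓ1def]
    rw [schwarz hΓ' y t₀]
    have key : pdx (pdt Γ) y t₀ = ((-R1p y) • Γ1 y t₀ + (-R1pp y) • Γ y t₀)
        + (R1 y • Γ2 y t₀ + R1p y • Γ1 y t₀) :=
      pdx_slice W1 (fun z => ((hdR1p z).neg.smul (hGd0 z t₀)).add
        ((hdR1 z).smul (hGd1 z t₀))) y
    rw [key]
    module
  have hGd2' : ∀ z, HasDerivAt (fun x' => Γ2 x' t₀)
      ((1/2 * u1 z) • Γ z t₀ + u0 z • Γ1 z t₀) z := by
    intro z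
    have h := hGd2 z t₀
    rw [hframe z] at h
    exact h
  have W3 : ∀ y, pdt Γ2 y t₀ = (-R1ppp y + 1/2 * (R1 y * u1 y)) • Γ y t₀
      + (-R1pp y + R1 y * u0 y) • Γ1 y t₀ + R1p y • Γ2 y t₀ := by
    intro y
    conv_lhs => rw [hΓ2def]
    rw [schwarz hΓ1s y t₀]
    have key : pdx (pdt Γ1) y t₀ = ((-R1pp y) • Γ1 y t₀ + (-R1ppp y) • Γ y t₀)
        + (R1 y • ((1/2 * u1 y) • Γ y t₀ + u0 y • Γ1 y t₀) + R1p y • Γ2 y t₀) :=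
      pdx_slice W2 (fun z => ((hdR1pp z).neg.smul (hGd0 z t₀)).add
        ((hdR1 z).smul (hGd2' z))) y
    rw [key]
    module
  have W4 : ∀ y, pdt Γ3 y t₀ =
      (-R1pppp y + R1p y * u1 y + 1/2 * (R1 y * u2 y)) • Γ y t₀
      + (-2 * R1ppp y + 2 * (R1p y * u0 y) + 3/2 * (R1 y * u1 y)) • Γ1 y t₀
      + (R1 y * u0 y) • Γ2 y t₀ := by
    intro y
    conv_lhs => rw [hΓ3def]
    rw [schwarz hΓ2s y t₀]
    have hdQ0 : ∀ z, HasDerivAt (fun w => -R1ppp w + 1/2 * (R1 w * u1 w))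
        (-R1pppp z + 1/2 * (R1p z * u1 z + R1 z * u2 z)) z :=
      fun z => (hdR1ppp z).neg.add (HasDerivAt.const_mul (1/2) ((hdR1 z).mul (hD1 z)))
    have hdQ1 : ∀ z, HasDerivAt (fun w => -R1pp w + R1 w * u0 w)
        (-R1ppp z + (R1p z * u0 z + R1 z * u1 z)) z :=
      fun z => (hdR1pp z).neg.add ((hdR1 z).mul (hD0 z))
    have key : pdx (pdt Γ2) y t₀ =
        (((-R1ppp y + 1/2 * (R1 y * u1 y)) • Γ1 y t₀
            + (-R1pppp y + 1/2 * (R1p y * u1 y + R1 y * u2 y)) • Γ y t₀)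
          + ((-R1pp y + R1 y * u0 y) • Γ2 y t₀
            + (-R1ppp y + (R1p y * u0 y + R1 y * u1 y)) • Γ1 y t₀))
        + (R1p y • ((1/2 * u1 y) • Γ y t₀ + u0 y • Γ1 y t₀) + R1pp y • Γ2 y t₀) :=
      pdx_slice W3 (fun z => (((hdQ0 z).smul (hGd0 z t₀)).add
        ((hdQ1 z).smul (hGd1 z t₀))).add ((hdR1p z).smul (hGd2' z))) y
    rw [key]
    module
  -- evolution of p₁ at t₀
  have hp₁t : ∀ y, pdt k₁ y t₀ = -2 * R1ppp y + 2 * (R1p y * u0 y) + R1 y * u1 y := by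
    intro y
    have hfun : (fun t' => k₁ y t') = fun t' => det3 (Γ y t') (Γ3 y t') (Γ2 y t') :=
      funext fun t' => hp₁ y t'
    have hder : HasDerivAt (fun t' => det3 (Γ y t') (Γ3 y t') (Γ2 y t'))
        (det3 (pdt Γ y t₀) (Γ3 y t₀) (Γ2 y t₀) + det3 (Γ y t₀) (pdt Γ3 y t₀) (Γ2 y t₀)
          + det3 (Γ y t₀) (Γ3 y t₀) (pdt Γ2 y t₀)) t₀ :=
      hasDerivAt_det3 (hGt0 y t₀) (hGt3 y t₀) (hGt2 y t₀)
    show deriv (fun t' => k₁ y t') t₀ = _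
    rw [hfun, hder.deriv]
    have hY3 : Γ3 y t₀ = (1/2 * u1 y) • Γ y t₀ + u0 y • Γ1 y t₀ + (0:ℝ) • Γ2 y t₀ := by
      rw [hframe y]; module
    have hZ2 : Γ2 y t₀ = (0:ℝ) • Γ y t₀ + (0:ℝ) • Γ1 y t₀ + (1:ℝ) • Γ2 y t₀ := by module
    have hX0 : Γ y t₀ = (1:ℝ) • Γ y t₀ + (0:ℝ) • Γ1 y t₀ + (0:ℝ) • Γ2 y t₀ := by module
    have h1 := det3_combo (harc y t₀)
      (show pdt Γ y t₀ = (-R1p y) • Γ y t₀ + R1 y • Γ1 y t₀ + (0:ℝ) • Γ2 y t₀ by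
        rw [W1 y]; module) hY3 hZ2
    have h2 := det3_combo (harc y t₀) hX0 (W4 y) hZ2
    have h3 := det3_combo (harc y t₀) hX0 hY3 (W3 y)
    rw [h1, h2, h3]
    ring
  -- evolution of p₀ at t₀
  have hp₀t : ∀ y, pdt p₀ y t₀ = (-R1pppp y + R1p y * u1 y + 1/2 * (R1 y * u2 y))
      + u0 y * R1pp y + 1/2 * (u1 y * R1p y) := by
    intro y
    have hfun : (fun t' => p₀ y t') = fun t' => det3 (Γ3 y t') (Γ1 y t') (Γ2 y t') :=
      funext fun t' => hp₀ y t'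
    have hder : HasDerivAt (fun t' => det3 (Γ3 y t') (Γ1 y t') (Γ2 y t'))
        (det3 (pdt Γ3 y t₀) (Γ1 y t₀) (Γ2 y t₀) + det3 (Γ3 y t₀) (pdt Γ1 y t₀) (Γ2 y t₀)
          + det3 (Γ3 y t₀) (Γ1 y t₀) (pdt Γ2 y t₀)) t₀ :=
      hasDerivAt_det3 (hGt3 y t₀) (hGt1 y t₀) (hGt2 y t₀)
    show deriv (fun t' => p₀ y t') t₀ = _
    rw [hfun, hder.deriv]
    have hY3 : Γ3 y t₀ = (1/2 * u1 y) • Γ y t₀ + u0 y • Γ1 y t₀ + (0:ℝ) • Γ2 y t₀ := by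
      rw [hframe y]; module
    have hZ2 : Γ2 y t₀ = (0:ℝ) • Γ y t₀ + (0:ℝ) • Γ1 y t₀ + (1:ℝ) • Γ2 y t₀ := by module
    have hY1 : Γ1 y t₀ = (0:ℝ) • Γ y t₀ + (1:ℝ) • Γ1 y t₀ + (0:ℝ) • Γ2 y t₀ := by module
    have h1 := det3_combo (harc y t₀) (W4 y) hY1 hZ2
    have h2 := det3_combo (harc y t₀) hY3
      (show pdt Γ1 y t₀ = (-R1pp y) • Γ y t₀ + (0:ℝ) • Γ1 y t₀ + R1 y • Γ2 y t₀ by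
        rw [W2 y]; module) hZ2
    have h3 := det3_combo (harc y t₀) hY3 hY1 (W3 y)
    rw [h1, h2, h3]
    ring
  constructor
  · -- the flow preserves conicity
    intro x
    have hfun : (fun t => k₂ x t + 1/2 * pdx k₁ x t)
        = fun t => p₀ x t - 1/2 * pdx k₁ x t := by
      funext t; rw [hk₂ x t]; ring
    rw [hfun]
    have hdp0 : HasDerivAt (fun t => p₀ x t) (pdt p₀ x t₀) t₀ :=
      ((slice_t hp₀s x).differentiable (by norm_num) t₀).hasDerivAt
    have hdpp : HasDerivAt (fun t => pdx k₁ x t) (pdt (pdx k₁) x t₀) t₀ :=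
      ((slice_t (contDiff_pdx hk₁s) x).differentiable (by norm_num) t₀).hasDerivAt
    have hcomb : HasDerivAt (fun t => p₀ x t - 1/2 * pdx k₁ x t)
        (pdt p₀ x t₀ - 1/2 * pdt (pdx k₁) x t₀) t₀ :=
      hdp0.sub (HasDerivAt.const_mul (1/2) hdpp)
    rw [hcomb.deriv, hp₀t x, schwarz hk₁s x t₀]
    have hKK' : pdx (pdt k₁) x t₀ = -2 * R1pppp x + 2 * (R1pp x * u0 x + R1p x * u1 x)
        + (R1p x * u1 x + R1 x * u2 x) :=
      pdx_slice hp₁t (fun z => ((HasDerivAt.const_mul (-2) (hdR1ppp z)).add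
        (HasDerivAt.const_mul 2 ((hdR1p z).mul (hD0 z)))).add ((hdR1 z).mul (hD1 z))) x
    rw [hKK']
    ring
  · -- the Kaup–Kuperschmidt equation
    intro x
    rw [hp₁t x, a0 x, a1 x, a2 x, a3 x, a5 x, hR1def, hR1pdef, hR1pppdef]
    ring
end
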